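/- arXiv:2310.15637 — 5 statements merged into one kernel-verified Lean document; each statement's English description precedes it below -/
import Mathlib

section
/- Let p be a prime, r ∈ ℕ, n ∈ ℕ₀, and let M_n^{(r)} be the n-th component polynomial of the r-fold Witt vector product X₁ ⊙ ⋯ ⊙ X_r, where X_j = (x_{0j}, …, x_{nj}, …). Assign weighted degree wt(x_{ij}) ≤ d_j·p^i for d_j ∈ ℕ and set d = Σ_{j=1}^r d_j. Then M_n^{(r)} is a polynomial with integer coefficients in the (n+1)r variables x_{ij} (0 ≤ i ≤ n, 1 ≤ j ≤ r), and its weighted degree is at most d·p^n. -/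
open MvPolynomial

section helpers

variable {σ : Type*} {R : Type*} [CommRing R] (w : σ → ℕ)

lemma wtd_le_iff {φ : MvPolynomial σ R} {m : ℕ} :
    weightedTotalDegree w φ ≤ m ↔ ∀ s ∈ φ.support, Finsupp.weight w s ≤ m :=
  Finset.sup_le_iff

lemma wtd_add_le {φ ψ : MvPolynomial σ R} {m : ℕ}
    (hφ : weightedTotalDegree w φ ≤ m) (hψ : weightedTotalDegree w ψ ≤ m) :
    weightedTotalDegree w (φ + ψ) ≤ m := by
  rw [wtd_le_iff] at *
  intro s hs
  classical
  rcases Finset.mem_union.mp (MvPolynomial.support_add hs) with h | h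
  · exact hφ s h
  · exact hψ s h

lemma wtd_neg {φ : MvPolynomial σ R} :
    weightedTotalDegree w (-φ) = weightedTotalDegree w φ := by
  simp [weightedTotalDegree, MvPolynomial.support_neg]

lemma wtd_mul_le {φ ψ : MvPolynomial σ R} {a b : ℕ}
    (hφ : weightedTotalDegree w φ ≤ a) (hψ : weightedTotalDegree w ψ ≤ b) :
    weightedTotalDegree w (φ * ψ) ≤ a + b := by
  classical
  rw [wtd_le_iff] at *
  intro s hs
  obtain ⟨u, hu, v, hv, rfl⟩ := Finset.mem_add.mp (MvPolynomial.support_mul φ ψ hs)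
  rw [map_add]
  exact add_le_add (hφ u hu) (hψ v hv)

lemma wtd_monomial_le (u : σ →₀ ℕ) (c : R) :
    weightedTotalDegree w (monomial u c) ≤ Finsupp.weight w u := by
  classical
  rw [wtd_le_iff]
  intro s hs
  rcases eq_or_ne c 0 with h | h
  · simp [h] at hs
  · rw [MvPolynomial.support_monomial, if_neg h] at hs
    simp only [Finset.mem_singleton] at hs
    subst hs; rfl

lemma wtd_C_le (c : R) : weightedTotalDegree w (C c) ≤ 0 := by
  have := wtd_monomial_le w (0 : σ →₀ ℕ) c
  simpa using this

lemma wtd_pow_le {φ : MvPolynomial σ R} {a : ℕ}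
    (hφ : weightedTotalDegree w φ ≤ a) (k : ℕ) :
    weightedTotalDegree w (φ ^ k) ≤ k * a := by
  induction k with
  | zero =>
    simp only [pow_zero, zero_mul]
    rw [← MvPolynomial.C_1]
    exact wtd_C_le w 1
  | succ k ih =>
    rw [pow_succ]
    calc weightedTotalDegree w (φ ^ k * φ) ≤ k * a + a := wtd_mul_le w ih hφ
    _ = (k + 1) * a := by ring

lemma wtd_C_mul_le {φ : MvPolynomial σ R} {a : ℕ} (c : R)
    (hφ : weightedTotalDegree w φ ≤ a) :
    weightedTotalDegree w (C c * φ) ≤ a := by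
  rw [wtd_le_iff] at *
  intro s hs
  rw [← smul_eq_C_mul] at hs
  exact hφ s (Finsupp.support_smul hs)

lemma wtd_sum_le {ι : Type*} (s : Finset ι) (f : ι → MvPolynomial σ R) {m : ℕ}
    (h : ∀ i ∈ s, weightedTotalDegree w (f i) ≤ m) :
    weightedTotalDegree w (∑ i ∈ s, f i) ≤ m := by
  classical
  induction s using Finset.induction with
  | empty => simp [weightedTotalDegree_zero]
  | @insert a s hi ih =>
    rw [Finset.sum_insert hi]
    exact wtd_add_le w (h a (Finset.mem_insert_self a s))
      (ih fun i his => h i (Finset.mem_insert_of_mem his))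

lemma wtd_prod_le {ι : Type*} (s : Finset ι) (f : ι → MvPolynomial σ R) (m : ι → ℕ)
    (h : ∀ i ∈ s, weightedTotalDegree w (f i) ≤ m i) :
    weightedTotalDegree w (∏ i ∈ s, f i) ≤ ∑ i ∈ s, m i := by
  classical
  induction s using Finset.induction with
  | empty =>
    simp only [Finset.prod_empty, Finset.sum_empty]
    rw [← MvPolynomial.C_1]
    exact wtd_C_le w 1
  | @insert a s hi ih =>
    rw [Finset.prod_insert hi, Finset.sum_insert hi]
    exact wtd_mul_le w (h a (Finset.mem_insert_self a s))
      (ih fun i his => h i (Finset.mem_insert_of_mem his))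

end helpers

/-- The `n`-th component polynomial `M_n^{(r)}` of the `r`-fold Witt vector product
(i.e. `wittStructureInt p (∏ j, X j) n`) has integer coefficients, involves only the
variables `x_{ij}` with `0 ≤ i ≤ n`, `1 ≤ j ≤ r`, and if `wt(x_{ij}) = d_j·p^i` then its
weighted degree is at most `d·p^n` where `d = Σ_j d_j`. -/
theorem witt_mul_poly_weighted_degree_le (p : ℕ) [Fact p.Prime] (r : ℕ) (hr : 0 < r)
    (n : ℕ) (d : Fin r → ℕ) (hd : ∀ j, 0 < d j) :
    (wittStructureInt p (∏ j : Fin r, X j) n).vars ⊆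
        Finset.univ ×ˢ Finset.range (n + 1) ∧
      MvPolynomial.weightedTotalDegree (fun v : Fin r × ℕ => d v.1 * p ^ v.2)
          (wittStructureInt p (∏ j : Fin r, X j) n) ≤ (∑ j, d j) * p ^ n := by
  constructor
  · exact wittStructureInt_vars p _ n
  · set w : Fin r × ℕ → ℕ := fun v => d v.1 * p ^ v.2 with hw
    set Φ : MvPolynomial (Fin r) ℤ := ∏ j : Fin r, X j with hΦ
    set D : ℕ := ∑ j, d j with hD
    -- strong induction
    induction n using Nat.strong_induction_on with
    | _ n IH =>
      have hprop := wittStructureInt_prop p Φ n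
      rw [bind₁, aeval_wittPolynomial] at hprop
      -- RHS bound
      have hRHS : weightedTotalDegree w (bind₁
          (fun j => rename (Prod.mk j) (wittPolynomial p ℤ n)) Φ) ≤ D * p ^ n := by
        rw [hΦ, map_prod]
        have : ∀ j : Fin r,
            weightedTotalDegree w (bind₁
              (fun j => rename (Prod.mk j) (wittPolynomial p ℤ n)) (X j))
              ≤ d j * p ^ n := by
          intro j
          rw [bind₁_X_right, wittPolynomial, map_sum]
          apply wtd_sum_le
          intro i hi
          rw [rename_monomial]
          refine le_trans (wtd_monomial_le w _ _) ?_
          rw [Finsupp.mapDomain_single]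
          have : (Finsupp.weight w) (Finsupp.single (j, i) (p ^ (n - i)))
              = p ^ (n - i) * (d j * p ^ i) := by
            rw [Finsupp.weight_apply, Finsupp.sum_single_index] <;> simp [hw]
          rw [this]
          rw [Finset.mem_range] at hi
          rw [← mul_assoc, mul_comm (p ^ (n-i)) (d j), mul_assoc, ← pow_add]
          rw [Nat.sub_add_cancel (Nat.lt_succ_iff.mp hi)]
        calc weightedTotalDegree w _ ≤ ∑ j : Fin r, d j * p ^ n :=
              wtd_prod_le w _ _ _ (fun j _ => this j)
          _ = D * p ^ n := by rw [hD, Finset.sum_mul]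
      -- lower terms bound
      have hlow : weightedTotalDegree w
          (∑ i ∈ Finset.range n, (p : MvPolynomial (Fin r × ℕ) ℤ) ^ i *
            wittStructureInt p Φ i ^ p ^ (n - i)) ≤ D * p ^ n := by
        apply wtd_sum_le
        intro i hi
        rw [Finset.mem_range] at hi
        have h1 : weightedTotalDegree w (wittStructureInt p Φ i) ≤ D * p ^ i :=
          IH i hi
        have h2 := wtd_pow_le w h1 (p ^ (n - i))
        have : (p : MvPolynomial (Fin r × ℕ) ℤ) ^ i = C ((p : ℤ) ^ i) := by
          simp
        rw [this]
        refine le_trans (wtd_C_mul_le w _ h2) ?_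
        rw [← mul_assoc, mul_comm (p ^ (n-i)) D, mul_assoc, ← pow_add]
        rw [Nat.sub_add_cancel hi.le]
      -- extract M n
      rw [Finset.sum_range_succ, Nat.sub_self, pow_zero, pow_one] at hprop
      have key : (p : MvPolynomial (Fin r × ℕ) ℤ) ^ n * wittStructureInt p Φ n =
          bind₁ (fun j => rename (Prod.mk j) (wittPolynomial p ℤ n)) Φ +
          -(∑ i ∈ Finset.range n, (p : MvPolynomial (Fin r × ℕ) ℤ) ^ i *
            wittStructureInt p Φ i ^ p ^ (n - i)) := by
        rw [← hprop]; ring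
      have hmul : weightedTotalDegree w
          ((p : MvPolynomial (Fin r × ℕ) ℤ) ^ n * wittStructureInt p Φ n) ≤ D * p ^ n := by
        rw [key]
        exact wtd_add_le w hRHS (by rw [wtd_neg]; exact hlow)
      -- remove the factor p^n using support equality
      have hp : ((p : ℤ) ^ n) ≠ 0 := by
        have := (Fact.out : p.Prime).pos
        positivity
      have hsupp : ((p : MvPolynomial (Fin r × ℕ) ℤ) ^ n *
          wittStructureInt p Φ n).support = (wittStructureInt p Φ n).support := by
        have : (p : MvPolynomial (Fin r × ℕ) ℤ) ^ n * wittStructureInt p Φ n =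
            ((p : ℤ) ^ n) • wittStructureInt p Φ n := by
          rw [smul_eq_C_mul]; simp
        rw [this, MvPolynomial.support_smul_eq hp]
      have heq : weightedTotalDegree w ((p : MvPolynomial (Fin r × ℕ) ℤ) ^ n *
          wittStructureInt p Φ n) = weightedTotalDegree w (wittStructureInt p Φ n) := by
        unfold MvPolynomial.weightedTotalDegree
        rw [hsupp]
      rwa [heq] at hmul
end

section
/- Let p be a prime, r ∈ ℕ, n ∈ ℕ₀. If each variable x_{ij} (0 ≤ i ≤ n, 1 ≤ j ≤ r) is assigned weighted degree p^i, then the multi-fold Witt multiplication polynomial M_n^{(r)} is weighted homogeneous of weighted degree r·p^n. -/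
/-!
Over `ℚ`, `M_n = wittStructureRat` is obtained by substituting into `xInTermsOfW n` (weighted
homogeneous of degree `p^n`) the polynomials `Φ(W_k(x_{·1}), …, W_k(x_{·r}))`, where
`Φ = X_1 ⋯ X_r` is homogeneous of degree `r` and the Witt polynomial `W_k` is weighted homogeneous
of degree `p^k`. Substituting, for each variable of weight `w`, a weighted homogeneous polynomial
of degree `c·w` multiplies weighted degrees by `c`, so `M_n` has degree `r·p^n`; the integral
version has the same monomials.
-/

open MvPolynomial Finset

namespace MvPolynomial.IsWeightedHomogeneous

variable {σ τ R S M : Type*} [CommSemiring R] [CommSemiring S] [CommSemiring M]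

theorem aeval [Algebra R S] {w : σ → M} {w' : τ → M} {φ : MvPolynomial σ R} {m : M}
    (hφ : φ.IsWeightedHomogeneous w m) (c : M) (g : σ → MvPolynomial τ S)
    (hg : ∀ i, (g i).IsWeightedHomogeneous w' (c * w i)) :
    (aeval g φ).IsWeightedHomogeneous w' (c * m) := by
  induction hφ using IsWeightedHomogeneous.induction_on with
  | zero => simpa using isWeightedHomogeneous_zero S w' _
  | add _ _ _ _ hp hq => simpa using hp.add hq
  | monomial d r hd =>
    rw [aeval_monomial, MvPolynomial.algebraMap_apply, ← hd, Finsupp.weight_apply, Finsupp.sum,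
      Finsupp.prod, Finset.mul_sum]
    refine .C_mul (.prod _ _ _ fun i _ => ?_) _
    rw [mul_smul_comm]
    exact (hg i).pow (d i)

theorem rename {w : σ → M} {w' : τ → M} {φ : MvPolynomial σ R} {m : M}
    (hφ : φ.IsWeightedHomogeneous w m) (f : σ → τ) (hw : ∀ i, w' (f i) = w i) :
    (rename f φ).IsWeightedHomogeneous w' m := by
  rw [rename_eq_aeval, ← one_mul m]
  exact hφ.aeval 1 (X ∘ f) fun i => by simpa [hw i] using isWeightedHomogeneous_X R w' (f i)

theorem of_map {w : σ → M} {φ : MvPolynomial σ R} {m : M} {f : R →+* S}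
    (hf : Function.Injective f) (h : (map f φ).IsWeightedHomogeneous w m) :
    φ.IsWeightedHomogeneous w m :=
  fun d hd => h (coeff_map f φ d ▸ map_zero f ▸ hf.ne hd)

end MvPolynomial.IsWeightedHomogeneous

section Witt

variable (p : ℕ)

theorem isWeightedHomogeneous_wittPolynomial (R : Type*) [CommRing R] (n : ℕ) :
    (wittPolynomial p R n).IsWeightedHomogeneous (p ^ ·) (p ^ n) := by
  refine .sum _ _ _ fun i hi => isWeightedHomogeneous_monomial _ _ _ ?_
  rw [Finsupp.weight_single, smul_eq_mul, ← pow_add,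
    Nat.sub_add_cancel (Nat.lt_succ_iff.mp (mem_range.mp hi))]

variable [Fact p.Prime]

theorem isWeightedHomogeneous_xInTermsOfW (n : ℕ) :
    (xInTermsOfW p ℚ n).IsWeightedHomogeneous (p ^ ·) (p ^ n) := by
  induction n using Nat.strong_induction_on with
  | _ n ih =>
    rw [xInTermsOfW_eq, mul_comm]
    refine .C_mul (.sub (isWeightedHomogeneous_X ℚ _ n) (.sum _ _ _ fun i hi => ?_)) _
    have hin := mem_range.mp hi
    have := ((ih i hin).pow (p ^ (n - i))).C_mul ((p : ℚ) ^ i)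
    rwa [smul_eq_mul, ← pow_add, Nat.sub_add_cancel hin.le] at this

theorem isWeightedHomogeneous_wittStructureRat {idx : Type*} {Φ : MvPolynomial idx ℚ} {r : ℕ}
    (hΦ : Φ.IsHomogeneous r) (n : ℕ) :
    (wittStructureRat p Φ n).IsWeightedHomogeneous (fun v : idx × ℕ => p ^ v.2) (r * p ^ n) := by
  refine (isWeightedHomogeneous_xInTermsOfW p n).aeval r _ fun k => ?_
  rw [mul_comm]
  refine IsWeightedHomogeneous.aeval hΦ (p ^ k) _ fun i => ?_
  simpa using (isWeightedHomogeneous_wittPolynomial p ℚ k).rename (Prod.mk i) fun _ => rfl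

theorem isWeightedHomogeneous_wittStructureInt {idx : Type*} {Φ : MvPolynomial idx ℤ} {r : ℕ}
    (hΦ : Φ.IsHomogeneous r) (n : ℕ) :
    (wittStructureInt p Φ n).IsWeightedHomogeneous (fun v : idx × ℕ => p ^ v.2) (r * p ^ n) := by
  refine .of_map (Int.castRingHom ℚ).injective_int ?_
  rw [map_wittStructureInt]
  exact isWeightedHomogeneous_wittStructureRat p (hΦ.map _) n

end Witt

theorem witt_mul_poly_isWeightedHomogeneous_general (p : ℕ) [Fact p.Prime] (r : ℕ) (n : ℕ) :
    MvPolynomial.IsWeightedHomogeneous (fun v : Fin r × ℕ => p ^ v.2)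
      (wittStructureInt p (∏ j : Fin r, X j) n) (r * p ^ n) := by
  have hprod : (∏ j : Fin r, X j : MvPolynomial (Fin r) ℤ).IsHomogeneous r := by
    simpa using IsHomogeneous.prod univ (fun j : Fin r => X j) 1 fun j _ => isHomogeneous_X ℤ j
  exact isWeightedHomogeneous_wittStructureInt p hprod n

/-- If each variable `x_{ij}` is assigned the weight `p^i`, then the `n`-th component
polynomial `M_n^{(r)}` of the `r`-fold Witt vector product is weighted homogeneous of
weighted degree `r·p^n`. -/
theorem witt_mul_poly_isWeightedHomogeneous (p : ℕ) [Fact p.Prime] (r : ℕ) (hr : 0 < r)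
    (n : ℕ) :
    MvPolynomial.IsWeightedHomogeneous (fun v : Fin r × ℕ => p ^ v.2)
      (wittStructureInt p (∏ j : Fin r, X j) n) (r * p ^ n) :=
  witt_mul_poly_isWeightedHomogeneous_general p r n
end

section
/- Let p be prime, q = p^h, and m ≥ 1. Let 𝓑_m be a subset of ℤ_q^n with q^{nm} elements whose reduction modulo p^m equals (ℤ_q/p^mℤ_q)^n. Then there exists a unique system of reduced Teichmüller polynomials g_{ij} (i ≥ m, 1 ≤ j ≤ n) in the nm variables x_{kl} (0 ≤ k ≤ m−1, 1 ≤ l ≤ n), each of total degree at most nm(q−1), such that every Y ∈ 𝓑_m equals X_m + Σ_{i≥m} (g_{i1}(X_m), …, g_{in}(X_m)) p^i, where X_m ∈ 𝓣_m is the Teichmüller lift of Y mod p^m. -/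
/-!
Distinct strings `A` of `m` Teichmüller digits give incongruent `X_A` modulo `p^m`, so by counting
each `A` has exactly one `Y_A ∈ B` with `Y_A ≡ X_A`, and `Y_A - X_A = p^m F(A)`. Any function
`F : 𝔽_q^σ → W(𝔽_q)` has a unique expansion `F(A) = Σ_t P_t(τ(A)) p^t` by reduced Teichmüller
polynomials: modulo `p`, `P_t(τ(A))` only depends on the reduction of `P_t` to `𝔽_q`, a reduced
polynomial over `𝔽_q` is determined by its values, and a Teichmüller coefficient is determined by
its residue. So `P_0` is forced, `F - P_0(τ(·))` is divisible by `p`, and one recurses.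
-/

open MvPolynomial

universe u

theorem MvPolynomial.totalDegree_le_card_mul_of_degreeOf_le {R σ : Type*} [CommSemiring R]
    [Fintype σ] {f : MvPolynomial σ R} {n : ℕ} (h : ∀ i, f.degreeOf i ≤ n) :
    f.totalDegree ≤ Fintype.card σ * n := by
  refine Finset.sup_le fun d hd => ?_
  calc (d.sum fun _ e => e) = ∑ i, d i := Finsupp.sum_fintype _ _ fun _ => rfl
    _ ≤ ∑ _i : σ, n := Finset.sum_le_sum fun i _ => degreeOf_le_iff.mp (h i) d hd
    _ = Fintype.card σ * n := by simp

theorem Finset.sum_Ico_add_attach_mul_pow {R : Type*} [CommRing R] (π : R) (m t : ℕ)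
    (c : {i : ℕ // m ≤ i} → R) :
    ∑ i ∈ (Finset.Ico m (m + t)).attach, c ⟨i.1, (Finset.mem_Ico.mp i.2).1⟩ * π ^ i.1 =
      π ^ m * ∑ s ∈ Finset.range t, c ⟨m + s, m.le_add_right s⟩ * π ^ s := by
  rw [Finset.mul_sum]
  refine Finset.sum_bij' (fun i _ => i.1 - m)
    (fun s hs => ⟨m + s, by simpa using Finset.mem_range.mp hs⟩) (fun i _ => ?_)
    (fun _ _ => Finset.mem_attach _ _) (fun i _ => ?_) (fun _ _ => ?_) (fun i _ => ?_)
  · have := Finset.mem_Ico.mp i.2; simp only [Finset.mem_range]; omega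
  · have := Finset.mem_Ico.mp i.2; ext; simp only; omega
  · simp
  · have := Finset.mem_Ico.mp i.2
    obtain ⟨s, hs⟩ := Nat.exists_eq_add_of_le this.1
    simp only [hs, Nat.add_sub_cancel_left, pow_add]
    ring

theorem forall_pow_dvd_sub_sum_Ico_iff {R : Type*} [CommRing R] [IsDomain R] {π : R} (hπ : π ≠ 0)
    (m : ℕ) (x : R) (c : {i : ℕ // m ≤ i} → R) :
    (∀ N, π ^ N ∣ π ^ m * x -
        ∑ i ∈ (Finset.Ico m N).attach, c ⟨i.1, (Finset.mem_Ico.mp i.2).1⟩ * π ^ i.1) ↔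
      ∀ t, π ^ t ∣ x - ∑ s ∈ Finset.range t, c ⟨m + s, m.le_add_right s⟩ * π ^ s := by
  refine ⟨fun h t => ?_, fun h N => ?_⟩
  · have := h (m + t)
    rw [Finset.sum_Ico_add_attach_mul_pow, pow_add, ← mul_sub] at this
    exact (mul_dvd_mul_iff_left (pow_ne_zero m hπ)).mp this
  · rcases le_or_gt N m with hN | hN
    · rw [Finset.sum_eq_zero fun i _ => absurd (Finset.mem_Ico.mp i.2) (by omega), sub_zero]
      exact dvd_mul_of_dvd_left (pow_dvd_pow π hN) x
    · obtain ⟨t, rfl⟩ := Nat.exists_eq_add_of_le hN.le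
      rw [Finset.sum_Ico_add_attach_mul_pow, pow_add, ← mul_sub]
      exact mul_dvd_mul_left _ (h t)

namespace WittVector

variable {p : ℕ} [Fact p.Prime]

local notation "𝕎" => WittVector p

section Digits

variable {k : Type*} [CommRing k]

noncomputable def ofTeichmullerDigits {m : ℕ} (a : Fin m → k) : 𝕎 k :=
  ∑ i : Fin m, (p : 𝕎 k) ^ (i : ℕ) * teichmuller p (a i)

theorem ofTeichmullerDigits_succ {m : ℕ} (a : Fin (m + 1) → k) :
    ofTeichmullerDigits a =
      ofTeichmullerDigits (a ∘ Fin.castSucc) + (p : 𝕎 k) ^ m * teichmuller p (a (Fin.last m)) := by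
  simp [ofTeichmullerDigits, Fin.sum_univ_castSucc]

variable [CharP k p] [PerfectRing k p]

theorem p_dvd_sub_iff_constantCoeff_eq {x y : 𝕎 k} :
    (p : 𝕎 k) ∣ x - y ↔ constantCoeff x = constantCoeff y := by
  rw [← Ideal.mem_span_singleton, ← ker_constantCoeff, RingHom.mem_ker, map_sub, sub_eq_zero]

theorem p_dvd_teichmuller_sub_teichmuller_iff {a b : k} :
    (p : 𝕎 k) ∣ teichmuller p a - teichmuller p b ↔ a = b := by
  simp only [p_dvd_sub_iff_constantCoeff_eq, constantCoeff_apply, teichmuller_coeff_zero]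

theorem eq_of_pow_dvd_ofTeichmullerDigits_sub [IsDomain k] {m : ℕ} {a b : Fin m → k}
    (h : (p : 𝕎 k) ^ m ∣ ofTeichmullerDigits a - ofTeichmullerDigits b) : a = b := by
  induction m with
  | zero => exact Subsingleton.elim a b
  | succ m ih =>
    rw [ofTeichmullerDigits_succ, ofTeichmullerDigits_succ, add_sub_add_comm, ← mul_sub] at h
    have hinit : a ∘ Fin.castSucc = b ∘ Fin.castSucc :=
      ih ((dvd_add_left (dvd_mul_right _ _)).mp (dvd_trans (pow_dvd_pow _ m.le_succ) h))
    have hlast : a (Fin.last m) = b (Fin.last m) := by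
      rw [hinit, sub_self, zero_add, pow_succ] at h
      exact p_dvd_teichmuller_sub_teichmuller_iff.mp
        ((mul_dvd_mul_iff_left (pow_ne_zero m (p_nonzero p k))).mp h)
    funext i
    induction i using Fin.lastCases with
    | last => exact hlast
    | cast i => exact congrFun hinit i

end Digits

section Lift

-- `σ` and `k` share a universe because `MvPolynomial.map_restrict_dom_evalₗ` requires it.
variable {k σ : Type u} [CommRing k]

noncomputable def teichmullerLift (P : MvPolynomial σ k) : MvPolynomial σ (𝕎 k) :=
  AddMonoidAlgebra.ofCoeff <|
    Finsupp.mapRange (teichmuller p) (teichmuller_zero p) (AddMonoidAlgebra.coeff P)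

theorem coeff_teichmullerLift (P : MvPolynomial σ k) (d : σ →₀ ℕ) :
    (teichmullerLift (p := p) P).coeff d = teichmuller p (P.coeff d) :=
  Finsupp.mapRange_apply (hf := teichmuller_zero p) ..

theorem map_constantCoeff_teichmullerLift (P : MvPolynomial σ k) :
    MvPolynomial.map constantCoeff (teichmullerLift (p := p) P) = P := by
  ext d
  rw [coeff_map, coeff_teichmullerLift, constantCoeff_apply, teichmuller_coeff_zero]

theorem constantCoeff_eval_teichmuller (P : MvPolynomial σ (𝕎 k)) (a : σ → k) :
    constantCoeff (MvPolynomial.eval (fun v => teichmuller p (a v)) P) =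
      MvPolynomial.eval a (MvPolynomial.map constantCoeff P) := by
  rw [eval_map, eval₂_comp]
  simp only [Function.comp_def, constantCoeff_apply, teichmuller_coeff_zero]

def HasTeichmullerExpansion (F : (σ → k) → 𝕎 k) (P : ℕ → MvPolynomial σ (𝕎 k)) : Prop :=
  ∀ a N, (p : 𝕎 k) ^ N ∣ F a - ∑ t ∈ Finset.range N,
    MvPolynomial.eval (fun v => teichmuller p (a v)) (P t) * (p : 𝕎 k) ^ t

end Lift

section FiniteField

variable {k σ : Type u} [Field k] [Fintype k]

def IsReducedTeichmuller (P : MvPolynomial σ (𝕎 k)) : Prop :=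
  (∀ d, P.coeff d ∈ Set.range (teichmuller p (R := k))) ∧ ∀ v, P.degreeOf v ≤ Fintype.card k - 1

theorem isReducedTeichmuller_teichmullerLift {P : MvPolynomial σ k}
    (hP : P ∈ restrictDegree σ k (Fintype.card k - 1)) :
    IsReducedTeichmuller (teichmullerLift (p := p) P) := by
  refine ⟨fun d => ⟨_, (coeff_teichmullerLift P d).symm⟩, fun v => degreeOf_le_iff.mpr ?_⟩
  intro d hd
  refine (mem_restrictDegree _ _ _).mp hP d (mem_support_iff.mpr fun h => ?_) v
  rw [mem_support_iff, coeff_teichmullerLift, h, teichmuller_zero] at hd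
  exact hd rfl

variable [Fintype σ]

theorem exists_isReducedTeichmuller_constantCoeff_eval (f : (σ → k) → k) :
    ∃ P : MvPolynomial σ (𝕎 k), IsReducedTeichmuller P ∧
      ∀ a, constantCoeff (MvPolynomial.eval (fun v => teichmuller p (a v)) P) = f a := by
  obtain ⟨Q, hQ, hQf⟩ := Submodule.mem_map.mp
    ((map_restrict_dom_evalₗ k σ).symm ▸ Submodule.mem_top : f ∈ _)
  refine ⟨teichmullerLift Q, isReducedTeichmuller_teichmullerLift hQ, fun a => ?_⟩
  rw [constantCoeff_eval_teichmuller, map_constantCoeff_teichmullerLift, ← hQf, evalₗ_apply]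

variable [CharP k p]

theorem IsReducedTeichmuller.ext {P Q : MvPolynomial σ (𝕎 k)} (hP : IsReducedTeichmuller P)
    (hQ : IsReducedTeichmuller Q)
    (h : ∀ a : σ → k, (p : 𝕎 k) ∣ MvPolynomial.eval (fun v => teichmuller p (a v)) P -
      MvPolynomial.eval (fun v => teichmuller p (a v)) Q) :
    P = Q := by
  have hreduced : ∀ R : MvPolynomial σ (𝕎 k), IsReducedTeichmuller R →
      MvPolynomial.map constantCoeff R ∈ restrictDegree σ k (Fintype.card k - 1) := fun R hR =>
    (mem_restrictDegree _ _ _).mpr fun d hd v =>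
      degreeOf_le_iff.mp (hR.2 v) d (support_map_subset _ _ hd)
  have hmap : MvPolynomial.map constantCoeff P = MvPolynomial.map constantCoeff Q := by
    refine sub_eq_zero.mp (eq_zero_of_eval_eq_zero σ k _ (fun a => ?_)
      (sub_mem (hreduced P hP) (hreduced Q hQ)))
    rw [map_sub, ← constantCoeff_eval_teichmuller, ← constantCoeff_eval_teichmuller, sub_eq_zero]
    exact p_dvd_sub_iff_constantCoeff_eq.mp (h a)
  ext d
  obtain ⟨a, ha⟩ := hP.1 d
  obtain ⟨b, hb⟩ := hQ.1 d
  have := congrArg (MvPolynomial.coeff d) hmap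
  rw [coeff_map, coeff_map, ← ha, ← hb, constantCoeff_apply, constantCoeff_apply,
    teichmuller_coeff_zero, teichmuller_coeff_zero] at this
  rw [← ha, ← hb, this]

theorem exists_hasTeichmullerExpansion (F : (σ → k) → 𝕎 k) :
    ∃ P, (∀ t, IsReducedTeichmuller (P t)) ∧ HasTeichmullerExpansion F P := by
  have step : ∀ G : (σ → k) → 𝕎 k, ∃ (P : MvPolynomial σ (𝕎 k)) (R : (σ → k) → 𝕎 k),
      IsReducedTeichmuller P ∧
        ∀ a, G a = MvPolynomial.eval (fun v => teichmuller p (a v)) P + p * R a := by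
    intro G
    obtain ⟨P, hP, hPG⟩ :=
      exists_isReducedTeichmuller_constantCoeff_eval (p := p) fun a => constantCoeff (G a)
    choose R hR using fun a => p_dvd_sub_iff_constantCoeff_eq.mpr (hPG a).symm
    exact ⟨P, R, hP, fun a => by linear_combination hR a⟩
  choose lead rest hlead hstep using step
  refine ⟨fun t => lead (rest^[t] F), fun t => hlead _, fun a N => ⟨rest^[N] F a, ?_⟩⟩
  induction N with
  | zero => simp
  | succ N ih =>
    rw [Finset.sum_range_succ, Function.iterate_succ_apply', pow_succ]
    linear_combination ih + (p : 𝕎 k) ^ N * hstep (rest^[N] F) a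

theorem HasTeichmullerExpansion.unique {F : (σ → k) → 𝕎 k} {P Q : ℕ → MvPolynomial σ (𝕎 k)}
    (hPred : ∀ t, IsReducedTeichmuller (P t)) (hQred : ∀ t, IsReducedTeichmuller (Q t))
    (hP : HasTeichmullerExpansion F P) (hQ : HasTeichmullerExpansion F Q) : P = Q := by
  funext t
  induction t using Nat.strong_induction_on with
  | _ t ih =>
  refine (hPred t).ext (hQred t) fun a => ?_
  have h := dvd_sub (hQ a (t + 1)) (hP a (t + 1))
  have hlow : ∑ s ∈ Finset.range t,
      MvPolynomial.eval (fun v => teichmuller p (a v)) (P s) * (p : 𝕎 k) ^ s =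
      ∑ s ∈ Finset.range t,
        MvPolynomial.eval (fun v => teichmuller p (a v)) (Q s) * (p : 𝕎 k) ^ s :=
    Finset.sum_congr rfl fun s hs => by rw [ih s (Finset.mem_range.mp hs)]
  rw [sub_sub_sub_cancel_left, Finset.sum_range_succ, Finset.sum_range_succ, hlow,
    add_sub_add_left_eq_sub, ← sub_mul, pow_succ'] at h
  exact (mul_dvd_mul_iff_right (pow_ne_zero t (p_nonzero p k))).mp h

theorem existsUnique_hasTeichmullerExpansion (F : (σ → k) → 𝕎 k) :
    ∃! P, (∀ t, IsReducedTeichmuller (P t)) ∧ HasTeichmullerExpansion F P :=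
  let ⟨P, hP⟩ := exists_hasTeichmullerExpansion F
  ⟨P, hP, fun _ hQ => HasTeichmullerExpansion.unique hQ.1 hP.1 hQ.2 hP.2⟩

theorem existsUnique_teichmullerExpansion_of_pow_dvd {m : ℕ} {F : (σ → k) → 𝕎 k}
    (hF : ∀ a, (p : 𝕎 k) ^ m ∣ F a) :
    ∃! g : {i : ℕ // m ≤ i} → MvPolynomial σ (𝕎 k), (∀ i, IsReducedTeichmuller (g i)) ∧
      ∀ a N, (p : 𝕎 k) ^ N ∣ F a - ∑ i ∈ (Finset.Ico m N).attach,
        MvPolynomial.eval (fun v => teichmuller p (a v)) (g ⟨i.1, (Finset.mem_Ico.mp i.2).1⟩) *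
          (p : 𝕎 k) ^ i.1 := by
  choose G hG using hF
  obtain ⟨P, ⟨hPred, hPG⟩, hPuniq⟩ := existsUnique_hasTeichmullerExpansion G
  have hshift : ∀ g : {i : ℕ // m ≤ i} → MvPolynomial σ (𝕎 k),
      (∀ a N, (p : 𝕎 k) ^ N ∣ F a - ∑ i ∈ (Finset.Ico m N).attach,
        MvPolynomial.eval (fun v => teichmuller p (a v)) (g ⟨i.1, (Finset.mem_Ico.mp i.2).1⟩) *
          (p : 𝕎 k) ^ i.1) ↔
      HasTeichmullerExpansion G fun t => g ⟨m + t, m.le_add_right t⟩ := fun g =>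
    forall_congr' fun a => by
      rw [hG a]
      exact forall_pow_dvd_sub_sum_Ico_iff (p_nonzero p k) m (G a)
        fun i => MvPolynomial.eval (fun v => teichmuller p (a v)) (g i)
  refine ⟨fun i => P (i.1 - m), ⟨fun i => hPred _, (hshift fun i => P (i.1 - m)).mpr ?_⟩,
    fun g hg => ?_⟩
  · simpa only [Nat.add_sub_cancel_left] using hPG
  have hgP := hPuniq _ ⟨fun t => hg.1 _, (hshift g).mp hg.2⟩
  funext ⟨i, hi⟩
  obtain ⟨t, rfl⟩ := Nat.exists_eq_add_of_le hi
  simpa only [Nat.add_sub_cancel_left] using congrFun hgP t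

theorem existsUnique_mem_of_pow_dvd_sub_ofTeichmullerDigits {ι : Type*} [Fintype ι] {m : ℕ}
    {B : Set (ι → 𝕎 k)} (hBcard : Nat.card B = Fintype.card k ^ (Fintype.card ι * m))
    (hBsurj : ∀ z : ι → 𝕎 k, ∃ Y ∈ B, ∀ j, (p : 𝕎 k) ^ m ∣ Y j - z j) (A : Fin m → ι → k) :
    ∃! Y, Y ∈ B ∧ ∀ j, (p : 𝕎 k) ^ m ∣ Y j - ofTeichmullerDigits fun i => A i j := by
  have hdigits : ∀ {A A' : Fin m → ι → k} {Z : ι → 𝕎 k},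
      (∀ j, (p : 𝕎 k) ^ m ∣ Z j - ofTeichmullerDigits fun i => A i j) →
      (∀ j, (p : 𝕎 k) ^ m ∣ Z j - ofTeichmullerDigits fun i => A' i j) → A = A' := by
    intro A A' Z h h'
    funext i j
    have := dvd_sub (h' j) (h j)
    rw [sub_sub_sub_cancel_left] at this
    exact congrFun (eq_of_pow_dvd_ofTeichmullerDigits_sub this) i
  choose Y hYB hY using fun A : Fin m → ι → k =>
    hBsurj fun j => ofTeichmullerDigits fun i => A i j
  have hinj : Function.Injective fun A => (⟨Y A, hYB A⟩ : B) := fun A A' hAA' => by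
    have hYA : Y A = Y A' := congrArg Subtype.val hAA'
    exact hdigits (hY A) (hYA ▸ hY A')
  have : Finite B := Nat.finite_of_card_ne_zero (by simp [hBcard])
  have hsurj := ((Nat.bijective_iff_injective_and_card _).mpr ⟨hinj, by
    rw [hBcard, Nat.card_fun, Nat.card_fun, Nat.card_eq_fintype_card, Nat.card_eq_fintype_card,
      Nat.card_fin, pow_mul]⟩).2
  refine ⟨Y A, ⟨hYB A, hY A⟩, fun Z ⟨hZB, hZ⟩ => ?_⟩
  obtain ⟨A', hA'⟩ := hsurj ⟨Z, hZB⟩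
  obtain rfl : Y A' = Z := congrArg Subtype.val hA'
  rw [hdigits (hY A') hZ]

end FiniteField

end WittVector

theorem box_representation_existsUnique_general (p h m n : ℕ) [Fact p.Prime]
    (hh : 0 < h)
    (B : Set (Fin n → WittVector p (GaloisField p h)))
    (hBcard : Nat.card B = (p ^ h) ^ (n * m))
    (hBsurj : ∀ z : Fin n → WittVector p (GaloisField p h),
      ∃ Y ∈ B, ∀ j, (p : WittVector p (GaloisField p h)) ^ m ∣ Y j - z j) :
    ∃! g : {i : ℕ // m ≤ i} → Fin n →
        MvPolynomial (Fin m × Fin n) (WittVector p (GaloisField p h)),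
      (∀ i j,
          (∀ d, (g i j).coeff d ∈
              Set.range (⇑(WittVector.teichmuller p (R := GaloisField p h)))) ∧
          (∀ v, (g i j).degreeOf v ≤ p ^ h - 1) ∧
          (g i j).totalDegree ≤ n * m * (p ^ h - 1)) ∧
      ∀ Y ∈ B, ∀ A : Fin m → Fin n → GaloisField p h,
        (∀ j, (p : WittVector p (GaloisField p h)) ^ m ∣
            Y j - ∑ i : Fin m,
              (p : WittVector p (GaloisField p h)) ^ (i : ℕ) *
                WittVector.teichmuller p (A i j)) →
        ∀ j, ∀ N : ℕ,
          (p : WittVector p (GaloisField p h)) ^ N ∣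
            Y j -
              (∑ i : Fin m,
                (p : WittVector p (GaloisField p h)) ^ (i : ℕ) *
                  WittVector.teichmuller p (A i j)) -
              ∑ i ∈ (Finset.Ico m N).attach,
                MvPolynomial.eval (fun v => WittVector.teichmuller p (A v.1 v.2))
                    (g ⟨i.1, (Finset.mem_Ico.mp i.2).1⟩ j) *
                  (p : WittVector p (GaloisField p h)) ^ i.1 := by
  let _ : Fintype (GaloisField p h) := Fintype.ofFinite _
  have hq : Fintype.card (GaloisField p h) = p ^ h := by
    rw [← Nat.card_eq_fintype_card]
    exact GaloisField.card p h hh.ne'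
  rw [← hq] at hBcard ⊢
  choose Y hY hYuniq using WittVector.existsUnique_mem_of_pow_dvd_sub_ofTeichmullerDigits
    (by rwa [Fintype.card_fin]) hBsurj
  choose G hG hGuniq using fun j => WittVector.existsUnique_teichmullerExpansion_of_pow_dvd
    (F := fun a : Fin m × Fin n → GaloisField p h =>
      Y (fun i j => a (i, j)) j - WittVector.ofTeichmullerDigits fun i => a (i, j))
    fun a => (hY _).2 j
  refine ⟨fun i j => G j i, ⟨fun i j => ⟨((hG j).1 i).1, ((hG j).1 i).2, ?_⟩, ?_⟩, ?_⟩
  · refine (MvPolynomial.totalDegree_le_card_mul_of_degreeOf_le ((hG j).1 i).2).trans ?_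
    rw [Fintype.card_prod, Fintype.card_fin, Fintype.card_fin, mul_comm m]
  · intro Z hZ A hA j N
    obtain rfl := hYuniq A Z ⟨hZ, hA⟩
    exact (hG j).2 (fun v => A v.1 v.2) N
  · rintro g ⟨hgred, hgexp⟩
    funext i j
    refine congrFun (hGuniq j (fun i => g i j) ⟨fun i => ⟨(hgred i j).1, (hgred i j).2.1⟩, ?_⟩) i
    exact fun a N => hgexp _ (hY _).1 _ (hY _).2 j N

/-- Box representation lemma: a box `𝓑_m ⊆ ℤ_q^n` (`ℤ_q ≅ W(𝔽_q)`, `q = p^h`) with `q^{nm}`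
elements reducing onto `(ℤ_q/p^mℤ_q)^n` is represented by a unique system of reduced
Teichmüller polynomials `g_{ij}` (`i ≥ m`, `1 ≤ j ≤ n`) in the `nm` variables `x_{kl}`, of
total degree at most `nm(q−1)`, such that every `Y ∈ 𝓑_m` equals
`X_m + Σ_{i≥m} (g_{i1}(X_m),…,g_{in}(X_m)) p^i`, where `X_m` is the Teichmüller lift of
`Y mod p^m` (i.e. `X_m = Σ_{i<m} τ(A_{ij}) p^i ≡ Y (mod p^m)`). -/
theorem box_representation_existsUnique (p h m n : ℕ) [Fact p.Prime]
    (hh : 0 < h) (hm : 0 < m) (hn : 0 < n)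
    (B : Set (Fin n → WittVector p (GaloisField p h)))
    (hBcard : Nat.card B = (p ^ h) ^ (n * m))
    (hBsurj : ∀ z : Fin n → WittVector p (GaloisField p h),
      ∃ Y ∈ B, ∀ j, (p : WittVector p (GaloisField p h)) ^ m ∣ Y j - z j) :
    ∃! g : {i : ℕ // m ≤ i} → Fin n →
        MvPolynomial (Fin m × Fin n) (WittVector p (GaloisField p h)),
      (∀ i j,
          (∀ d, (g i j).coeff d ∈
              Set.range (⇑(WittVector.teichmuller p (R := GaloisField p h)))) ∧
          (∀ v, (g i j).degreeOf v ≤ p ^ h - 1) ∧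
          (g i j).totalDegree ≤ n * m * (p ^ h - 1)) ∧
      ∀ Y ∈ B, ∀ A : Fin m → Fin n → GaloisField p h,
        (∀ j, (p : WittVector p (GaloisField p h)) ^ m ∣
            Y j - ∑ i : Fin m,
              (p : WittVector p (GaloisField p h)) ^ (i : ℕ) *
                WittVector.teichmuller p (A i j)) →
        ∀ j, ∀ N : ℕ,
          (p : WittVector p (GaloisField p h)) ^ N ∣
            Y j -
              (∑ i : Fin m,
                (p : WittVector p (GaloisField p h)) ^ (i : ℕ) *
                  WittVector.teichmuller p (A i j)) -
              ∑ i ∈ (Finset.Ico m N).attach,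
                MvPolynomial.eval (fun v => WittVector.teichmuller p (A v.1 v.2))
                    (g ⟨i.1, (Finset.mem_Ico.mp i.2).1⟩ j) *
                  (p : WittVector p (GaloisField p h)) ^ i.1 :=
  box_representation_existsUnique_general p h m n hh B hBcard hBsurj
end

section
/- If the box 𝓑_m is in split form 𝓑_m = 𝓘₁ × ⋯ × 𝓘_n with each 𝓘_j ⊆ ℤ_q of size q^m reducing onto ℤ_q/p^mℤ_q, then in the representation Y = X_m + Σ_{i≥m} (g_{i1}(X_m), …, g_{in}(X_m)) p^i, each polynomial g_{ij} depends only on the variables x_{0j}, …, x_{m−1,j} and has total degree at most m(q−1). -/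
open MvPolynomial

section Aux

variable {σ : Type*} {R : Type*} [CommRing R] [DecidableEq σ]

/-- The part of a polynomial supported on monomials whose variables all satisfy `P`. -/
noncomputable def varRestrict (P : σ → Prop) [DecidablePred P] (q : MvPolynomial σ R) :
    MvPolynomial σ R :=
  ∑ d ∈ q.support.filter (fun d => ∀ v ∈ d.support, P v), monomial d (q.coeff d)

variable (P : σ → Prop) [DecidablePred P] (q : MvPolynomial σ R)

theorem coeff_varRestrict (e : σ →₀ ℕ) :
    (varRestrict P q).coeff e =
      if ∀ v ∈ e.support, P v then q.coeff e else 0 := by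
  classical
  rw [varRestrict, coeff_sum]
  simp only [coeff_monomial]
  rw [Finset.sum_ite_eq' (q.support.filter fun d => ∀ v ∈ d.support, P v) e fun d => q.coeff d]
  by_cases hP : ∀ v ∈ e.support, P v
  · by_cases hs : e ∈ q.support
    · simp [Finset.mem_filter, hP, hs]
    · simp only [Finset.mem_filter, hs, false_and, if_false, if_pos hP]
      exact (MvPolynomial.notMem_support_iff.mp hs).symm
  · simp only [Finset.mem_filter]
    rw [if_neg hP, if_neg (fun hc => hP hc.2)]

theorem eval_varRestrict (x : σ → R) :
    eval x (varRestrict P q) = eval (fun v => if P v then x v else 0) q := by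
  classical
  rw [varRestrict, map_sum]
  rw [eval_eq (fun v => if P v then x v else 0) q, ← Finset.sum_filter_add_sum_filter_not
    q.support (fun d => ∀ v ∈ d.support, P v)]
  have h2 : ∑ d ∈ q.support.filter (fun d => ¬ ∀ v ∈ d.support, P v),
      q.coeff d * ∏ v ∈ d.support, (if P v then x v else 0) ^ d v = 0 := by
    apply Finset.sum_eq_zero
    intro d hd
    obtain ⟨hd1, hd2⟩ := Finset.mem_filter.mp hd
    push_neg at hd2
    obtain ⟨v, hv, hPv⟩ := hd2
    rw [Finset.prod_eq_zero hv, mul_zero]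
    rw [if_neg hPv]
    exact zero_pow (Finsupp.mem_support_iff.mp hv)
  rw [h2, add_zero]
  apply Finset.sum_congr rfl
  intro d hd
  obtain ⟨hd1, hd2⟩ := Finset.mem_filter.mp hd
  rw [eval_monomial]
  congr 1
  apply Finset.prod_congr rfl
  intro v hv
  rw [if_pos (hd2 v hv)]

theorem support_varRestrict : (varRestrict P q).support ⊆ q.support := by
  intro e he
  rw [MvPolynomial.mem_support_iff, coeff_varRestrict] at he
  rw [MvPolynomial.mem_support_iff]
  intro h0
  apply he
  split <;> simp [h0]

theorem vars_varRestrict {v : σ} (hv : v ∈ (varRestrict P q).vars) : P v := by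
  rw [mem_vars] at hv
  obtain ⟨d, hd, hvd⟩ := hv
  rw [MvPolynomial.mem_support_iff, coeff_varRestrict] at hd
  by_contra hPv
  apply hd
  rw [if_neg]
  push_neg
  exact ⟨v, hvd, hPv⟩

theorem mem_support_of_varRestrict {e : σ →₀ ℕ} (he : e ∈ (varRestrict P q).support)
    {v : σ} (hv : v ∈ e.support) : P v := by
  rw [MvPolynomial.mem_support_iff, coeff_varRestrict] at he
  by_contra hPv
  apply he
  rw [if_neg]
  push_neg
  exact ⟨v, hv, hPv⟩

end Aux

/-- If the box `𝓑_m = 𝓘₁ × ⋯ × 𝓘_n` is split (each `𝓘_j ⊆ ℤ_q ≅ W(𝔽_q)` has `q^m` elements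
reducing onto `ℤ_q/p^mℤ_q`), then the unique reduced Teichmüller polynomials `g_{ij}`
representing `𝓑_m` over the Teichmüller box depend only on the variables
`x_{0j}, …, x_{m−1,j}` and have total degree at most `m(q−1)`. -/
theorem split_box_representation (p h m n : ℕ) [Fact p.Prime]
    (hh : 0 < h) (hm : 0 < m) (hn : 0 < n)
    (I : Fin n → Set (WittVector p (GaloisField p h)))
    (hIcard : ∀ j, Nat.card (I j) = (p ^ h) ^ m)
    (hIsurj : ∀ j, ∀ z : WittVector p (GaloisField p h),
      ∃ y ∈ I j, (p : WittVector p (GaloisField p h)) ^ m ∣ y - z)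
    (g : {i : ℕ // m ≤ i} → Fin n →
      MvPolynomial (Fin m × Fin n) (WittVector p (GaloisField p h)))
    (hgTeich : ∀ i j, ∀ d, (g i j).coeff d ∈
      Set.range (⇑(WittVector.teichmuller p (R := GaloisField p h))))
    (hgred : ∀ i j, ∀ v, (g i j).degreeOf v ≤ p ^ h - 1)
    (hgrep : ∀ Y : Fin n → WittVector p (GaloisField p h), (∀ j, Y j ∈ I j) →
      ∀ A : Fin m → Fin n → GaloisField p h,
        (∀ j, (p : WittVector p (GaloisField p h)) ^ m ∣
            Y j - ∑ i : Fin m,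
              (p : WittVector p (GaloisField p h)) ^ (i : ℕ) *
                WittVector.teichmuller p (A i j)) →
        ∀ j, ∀ N : ℕ,
          (p : WittVector p (GaloisField p h)) ^ N ∣
            Y j -
              (∑ i : Fin m,
                (p : WittVector p (GaloisField p h)) ^ (i : ℕ) *
                  WittVector.teichmuller p (A i j)) -
              ∑ i ∈ (Finset.Ico m N).attach,
                MvPolynomial.eval (fun v => WittVector.teichmuller p (A v.1 v.2))
                    (g ⟨i.1, (Finset.mem_Ico.mp i.2).1⟩ j) *
                  (p : WittVector p (GaloisField p h)) ^ i.1) :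
    ∀ i j, (∀ v ∈ (g i j).vars, v.2 = j) ∧ (g i j).totalDegree ≤ m * (p ^ h - 1) := by
  classical
  haveI : Fintype (GaloisField p h) := Fintype.ofFinite _
  have hcardK : Fintype.card (GaloisField p h) = p ^ h := by
    rw [← Nat.card_eq_fintype_card]
    exact GaloisField.card p h hh.ne'
  -- the key claim: each `g i j` equals its restriction to column-`j` monomials
  have key : ∀ i : ℕ, ∀ hi : m ≤ i, ∀ j : Fin n,
      g ⟨i, hi⟩ j = varRestrict (fun v : Fin m × Fin n => v.2 = j) (g ⟨i, hi⟩ j) := by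
    intro i
    induction i using Nat.strong_induction_on with
    | _ i IH =>
    intro hi j
    set Pj : Fin m × Fin n → Prop := fun v => v.2 = j with hPj
    -- Step 1: for every Teichmüller point, the two evaluations agree mod p
    have hdvd : ∀ A : Fin m → Fin n → GaloisField p h,
        (p : WittVector p (GaloisField p h)) ∣
          MvPolynomial.eval (fun v : Fin m × Fin n => WittVector.teichmuller p (A v.1 v.2))
            (varRestrict Pj (g ⟨i, hi⟩ j)) -
          MvPolynomial.eval (fun v : Fin m × Fin n => WittVector.teichmuller p (A v.1 v.2))
            (g ⟨i, hi⟩ j) := by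
      intro A
      set A0 : Fin m → Fin n → GaloisField p h := fun i' j' => if j' = j then A i' j' else 0 with hA0
      choose Y hY1 hY2 using fun j' =>
        hIsurj j' (∑ i' : Fin m, (p : WittVector p (GaloisField p h)) ^ (i' : ℕ) * WittVector.teichmuller p (A i' j'))
      choose Y' hY'1 hY'2 using fun j' =>
        hIsurj j' (∑ i' : Fin m, (p : WittVector p (GaloisField p h)) ^ (i' : ℕ) * WittVector.teichmuller p (A0 i' j'))
      set Y0 : Fin n → WittVector p (GaloisField p h) := fun j' => if j' = j then Y j else Y' j' with hY0
      have hY0j : Y0 j = Y j := by simp [hY0]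
      have hS : (∑ i' : Fin m, (p : WittVector p (GaloisField p h)) ^ (i' : ℕ) * WittVector.teichmuller p (A0 i' j))
          = ∑ i' : Fin m, (p : WittVector p (GaloisField p h)) ^ (i' : ℕ) * WittVector.teichmuller p (A i' j) := by
        apply Finset.sum_congr rfl
        intro x _
        simp [hA0]
      have hY01 : ∀ j', Y0 j' ∈ I j' := by
        intro j'
        by_cases hj : j' = j
        · subst hj; simpa [hY0] using hY1 j'
        · simpa [hY0, hj] using hY'1 j'
      have hY02 : ∀ j', (p : WittVector p (GaloisField p h)) ^ m ∣
          Y0 j' - ∑ i' : Fin m, (p : WittVector p (GaloisField p h)) ^ (i' : ℕ) * WittVector.teichmuller p (A0 i' j') := by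
        intro j'
        by_cases hj : j' = j
        · subst hj
          rw [hY0j, hS]
          exact hY2 j'
        · simpa [hY0, hj] using hY'2 j'
      have H1 := hgrep Y hY1 A hY2 j (i + 1)
      have H2 := hgrep Y0 hY01 A0 hY02 j (i + 1)
      -- the difference of evaluations, as a function of the index
      set F : ℕ → WittVector p (GaloisField p h) := fun i' =>
        if hi' : m ≤ i' then
          (MvPolynomial.eval (fun v : Fin m × Fin n => WittVector.teichmuller p (A v.1 v.2))
              (g ⟨i', hi'⟩ j) -
            MvPolynomial.eval (fun v : Fin m × Fin n => WittVector.teichmuller p (A0 v.1 v.2))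
              (g ⟨i', hi'⟩ j)) * (p : WittVector p (GaloisField p h)) ^ i'
        else 0 with hF
      have hsum : (p : WittVector p (GaloisField p h)) ^ (i + 1) ∣ ∑ i' ∈ Finset.Ico m (i + 1), F i' := by
        have H3 := dvd_sub H2 H1
        rw [hY0j, hS] at H3
        have e4 : ∀ a b c d : WittVector p (GaloisField p h), a - b - c - (a - b - d) = d - c := by intros; ring
        rw [e4] at H3
        rw [← Finset.sum_attach (Finset.Ico m (i + 1)) F]
        rw [← Finset.sum_sub_distrib] at H3
        convert H3 using 2 with x _
        have hmx : m ≤ x.1 := (Finset.mem_Ico.mp x.2).1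
        simp only [hF]
        rw [dif_pos hmx]
        ring
      -- evaluating the restricted polynomial at `A` is evaluating the original at `A0`
      have hswap : ∀ q : MvPolynomial (Fin m × Fin n) (WittVector p (GaloisField p h)),
          MvPolynomial.eval (fun v : Fin m × Fin n => WittVector.teichmuller p (A v.1 v.2))
              (varRestrict Pj q) =
            MvPolynomial.eval (fun v : Fin m × Fin n => WittVector.teichmuller p (A0 v.1 v.2))
              q := by
        intro q
        rw [eval_varRestrict]
        have hx : (fun v : Fin m × Fin n =>
            if Pj v then WittVector.teichmuller p (A v.1 v.2) else 0) =
            (fun v : Fin m × Fin n => WittVector.teichmuller p (A0 v.1 v.2)) := by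
          funext v
          by_cases hv : Pj v
          · rw [if_pos hv, hA0]
            simp only [hPj] at hv
            simp [hv]
          · rw [if_neg hv, hA0]
            simp only [hPj] at hv
            simp [hv, WittVector.teichmuller_zero]
        rw [hx]
      rw [Finset.sum_Ico_succ_top hi] at hsum
      have hlow : ∑ i' ∈ Finset.Ico m i, F i' = 0 := by
        apply Finset.sum_eq_zero
        intro i' hi'
        obtain ⟨h1, h2⟩ := Finset.mem_Ico.mp hi'
        simp only [hF]
        rw [dif_pos h1, ← hswap (g ⟨i', h1⟩ j), ← IH i' h2 h1 j, sub_self, zero_mul]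
      rw [hlow, zero_add] at hsum
      simp only [hF] at hsum
      rw [dif_pos hi] at hsum
      obtain ⟨c, hc⟩ := hsum
      have hcan :
          MvPolynomial.eval (fun v : Fin m × Fin n => WittVector.teichmuller p (A v.1 v.2))
              (g ⟨i, hi⟩ j) -
            MvPolynomial.eval (fun v : Fin m × Fin n => WittVector.teichmuller p (A0 v.1 v.2))
              (g ⟨i, hi⟩ j) = (p : WittVector p (GaloisField p h)) * c := by
        apply mul_right_cancel₀ (pow_ne_zero i (WittVector.p_nonzero p (GaloisField p h)))
        rw [hc]; ring
      rw [hswap (g ⟨i, hi⟩ j)]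
      have : MvPolynomial.eval (fun v : Fin m × Fin n => WittVector.teichmuller p (A0 v.1 v.2))
              (g ⟨i, hi⟩ j) -
            MvPolynomial.eval (fun v : Fin m × Fin n => WittVector.teichmuller p (A v.1 v.2))
              (g ⟨i, hi⟩ j) = (p : WittVector p (GaloisField p h)) * (-c) := by
        rw [mul_neg, ← hcan]; ring
      rw [this]
      exact dvd_mul_right _ _
    -- Step 2: conclude equality of the polynomials
    set D : MvPolynomial (Fin m × Fin n) (WittVector p (GaloisField p h)) :=
      g ⟨i, hi⟩ j - varRestrict Pj (g ⟨i, hi⟩ j) with hD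
    have hφteich : ∀ a : GaloisField p h, WittVector.constantCoeff (WittVector.teichmuller p a) = a := by
      intro a
      rw [WittVector.constantCoeff_apply, WittVector.teichmuller_coeff_zero]
    have hevalD : ∀ a : Fin m × Fin n → GaloisField p h,
        MvPolynomial.eval a (MvPolynomial.map (WittVector.constantCoeff (p := p)) D) = 0 := by
      intro a
      have h1 := hdvd (fun i' j' => a (i', j'))
      have h2 : (p : WittVector p (GaloisField p h)) ∣ MvPolynomial.eval (fun v : Fin m × Fin n =>
          WittVector.teichmuller p (a v)) D := by
        rw [hD, map_sub]
        have := (dvd_neg.mpr h1)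
        simpa [neg_sub] using this
      obtain ⟨c, hc⟩ := h2
      rw [eval_map]
      have e1 : MvPolynomial.eval₂ (WittVector.constantCoeff (p := p)) a D =
          WittVector.constantCoeff (MvPolynomial.eval (fun v : Fin m × Fin n =>
            WittVector.teichmuller p (a v)) D) := by
        rw [show MvPolynomial.eval (fun v : Fin m × Fin n => WittVector.teichmuller p (a v)) D =
            MvPolynomial.eval₂ (RingHom.id (WittVector p (GaloisField p h)))
              (fun v : Fin m × Fin n => WittVector.teichmuller p (a v)) D from rfl]
        rw [eval₂_comp_left (WittVector.constantCoeff (p := p)) (RingHom.id (WittVector p (GaloisField p h))) _ D]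
        have hax : (⇑(WittVector.constantCoeff (p := p)) ∘
            fun v : Fin m × Fin n => WittVector.teichmuller p (a v)) = a := by
          funext v
          exact hφteich (a v)
        rw [RingHom.comp_id, hax]
      rw [e1, hc, map_mul]
      have : (WittVector.constantCoeff (p := p)) (p : WittVector p (GaloisField p h)) = 0 := by
        rw [map_natCast, CharP.cast_eq_zero]
      rw [this, zero_mul]
    have hDdeg : MvPolynomial.map (WittVector.constantCoeff (p := p)) D ∈
        MvPolynomial.restrictDegree (Fin m × Fin n) (GaloisField p h) (Fintype.card (GaloisField p h) - 1) := by
      rw [MvPolynomial.mem_restrictDegree]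
      intro s hs v
      have hs' : s ∈ D.support := MvPolynomial.support_map_subset _ _ hs
      have hsg : s ∈ (g ⟨i, hi⟩ j).support := by
        rw [MvPolynomial.mem_support_iff] at hs' ⊢
        intro h0
        apply hs'
        rw [hD, MvPolynomial.coeff_sub, coeff_varRestrict, h0]
        split <;> simp
      have := MvPolynomial.degreeOf_le_iff.mp (hgred ⟨i, hi⟩ j v) s hsg
      omega
    have hmap0 : MvPolynomial.map (WittVector.constantCoeff (p := p)) D = 0 :=
      MvPolynomial.eq_zero_of_eval_eq_zero (Fin m × Fin n) (GaloisField p h) _ hevalD hDdeg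
    have hD0 : D = 0 := by
      ext d
      rw [MvPolynomial.coeff_zero]
      have h1 : WittVector.constantCoeff (D.coeff d) = 0 := by
        rw [← MvPolynomial.coeff_map, hmap0, MvPolynomial.coeff_zero]
      by_cases hPd : ∀ v ∈ d.support, Pj v
      · rw [hD, MvPolynomial.coeff_sub, coeff_varRestrict, if_pos hPd, sub_self]
      · obtain ⟨c, hcT⟩ := hgTeich ⟨i, hi⟩ j d
        have e2 : D.coeff d = WittVector.teichmuller p c := by
          rw [hD, MvPolynomial.coeff_sub, coeff_varRestrict, if_neg hPd, sub_zero, hcT]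
        rw [e2] at h1 ⊢
        rw [hφteich c] at h1
        rw [h1, WittVector.teichmuller_zero]
    have := sub_eq_zero.mp hD0
    exact this
  -- derive the two conclusions
  rintro ⟨iv, hiv⟩ j
  have hk := key iv hiv j
  constructor
  · intro v hv
    rw [hk] at hv
    exact vars_varRestrict (fun v : Fin m × Fin n => v.2 = j) _ hv
  · rw [hk, MvPolynomial.totalDegree]
    apply Finset.sup_le
    intro d hd
    have hdg : d ∈ (g ⟨iv, hiv⟩ j).support := support_varRestrict _ _ hd
    have hP : ∀ v ∈ d.support, v.2 = j := fun v hv => mem_support_of_varRestrict _ _ hd hv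
    have hsub : d.support ⊆ Finset.univ.image (fun i' : Fin m => ((i' : Fin m), j)) := by
      intro v hv
      rw [Finset.mem_image]
      exact ⟨v.1, Finset.mem_univ _, by rw [← hP v hv]⟩
    have hcardsupp : d.support.card ≤ m := by
      calc d.support.card ≤ (Finset.univ.image (fun i' : Fin m => ((i' : Fin m), j))).card :=
            Finset.card_le_card hsub
        _ ≤ (Finset.univ : Finset (Fin m)).card := Finset.card_image_le
        _ = m := by simp
    calc (d.sum fun _ e => e) = ∑ v ∈ d.support, d v := rfl
      _ ≤ ∑ _v ∈ d.support, (p ^ h - 1) :=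
          Finset.sum_le_sum fun v hv =>
            MvPolynomial.degreeOf_le_iff.mp (hgred ⟨iv, hiv⟩ j v) d hdg
      _ = d.support.card * (p ^ h - 1) := by rw [Finset.sum_const, smul_eq_mul]
      _ ≤ m * (p ^ h - 1) := Nat.mul_le_mul_right _ hcardsupp
end

section
/- Ax–Katz over boxes: let p be prime, q = p^h, let 𝓑₁ ⊆ ℤ_q^n have q^n elements with 𝓑₁ mod p = 𝔽_q^n, and let f₁, …, f_s ∈ ℤ_q[x₁,…,x_n] be nonconstant. If V = {X ∈ 𝓑₁ : f₁(X) ≡ ⋯ ≡ f_s(X) ≡ 0 mod p}, then ord_q(|V|) ≥ ⌈(n − Σ_{k=1}^s deg f_k)/max_k deg f_k⌉*, where ⌈t⌉* is the least nonnegative integer ≥ t. -/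
/-!
Reduction mod `p` maps the box bijectively onto `𝔽_q^n` and the congruences `f_k(X) ≡ 0 mod p`
only depend on `X mod p`, so `|V|` counts the `y ∈ 𝔽_q^n` whose Teichmüller lift `ŷ` satisfies
`p ∣ f_k(ŷ)` for all `k`; this count is treated by Wan's elementary proof of Ax–Katz in `W(𝔽_q)`.

With `μ` the claimed exponent and `D = (q - 1) p^(hμ)`, Fermat–Euler makes each factor of
`T = ∑_y ∏_k (1 - f_k(ŷ)^D)` congruent to `1` or `0` mod `p^(hμ)` according to whether
`p ∣ f_k(ŷ)`, so `T ≡ |V|`. Expanding the product instead, `T` becomes a combination of products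
of Teichmüller power sums `∑_c ĉ^u`, which vanish unless `q - 1 ∣ u` and equal `q` for `u = 0`,
weighted by multinomial coefficients. By Legendre's formula the `p`-adic valuation of a
multinomial coefficient is a difference of base-`p` digit sums; Wan bounds it with the cyclically
rotated digit sums `cyclicDigitSum p h j`, which are subadditive and `≡ p^j e mod q - 1`. For each
of the `h` rotations the degree bounds give a factor `p^μ`, up to the factors `q` contributed by
vanishing exponents.
-/

open Finset

namespace Nat

def cyclicOfDigits (p h : ℕ) : ℕ → List ℕ → ℕ
  | _, [] => 0
  | j, d :: L => d * p ^ (j % h) + cyclicOfDigits p h (j + 1) L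

def cyclicDigitSum (p h j e : ℕ) : ℕ := cyclicOfDigits p h j (p.digits e)

variable {p h : ℕ}

@[simp] lemma cyclicDigitSum_zero (j : ℕ) : cyclicDigitSum p h j 0 = 0 := by
  simp [cyclicDigitSum, cyclicOfDigits]

lemma cyclicDigitSum_eq_mod_add_div (hp : 1 < p) (j e : ℕ) :
    cyclicDigitSum p h j e = e % p * p ^ (j % h) + cyclicDigitSum p h (j + 1) (e / p) := by
  rcases e.eq_zero_or_pos with rfl | he
  · simp
  · rw [cyclicDigitSum, digits_def' hp he]; rfl

lemma digits_sum_eq_mod_add_div (hp : 1 < p) (e : ℕ) :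
    (p.digits e).sum = e % p + (p.digits (e / p)).sum := by
  rcases e.eq_zero_or_pos with rfl | he
  · simp
  · rw [digits_def' hp he, List.sum_cons]

lemma cyclicDigitSum_add_period (j e : ℕ) :
    cyclicDigitSum p h (j + h) e = cyclicDigitSum p h j e := by
  rw [cyclicDigitSum, cyclicDigitSum]
  induction p.digits e generalizing j with
  | nil => rfl
  | cons d L ih => simp only [cyclicOfDigits, add_mod_right, add_right_comm j h 1, ih]

lemma cyclicDigitSum_one (hp : 1 < p) (j : ℕ) : cyclicDigitSum p h j 1 = p ^ (j % h) := by
  rw [cyclicDigitSum_eq_mod_add_div hp, mod_eq_of_lt hp, div_eq_of_lt hp]; simp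

lemma cyclicDigitSum_pos (hp : 1 < p) {e : ℕ} (he : e ≠ 0) (j : ℕ) :
    0 < cyclicDigitSum p h j e := by
  induction e using Nat.strong_induction_on generalizing j with
  | _ e ih =>
    rw [cyclicDigitSum_eq_mod_add_div hp]
    rcases (e % p).eq_zero_or_pos with h0 | h0
    · have hq : e / p ≠ 0 := by
        intro hq; have := div_add_mod e p; rw [hq, h0] at this; omega
      have := ih (e / p) (div_lt_self (pos_of_ne_zero he) hp) hq (j + 1)
      omega
    · have := Nat.mul_pos h0 (Nat.pow_pos (n := j % h) (by omega : 0 < p))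
      omega

lemma cyclicDigitSum_add_le (hp : 1 < p) (a b j : ℕ) :
    cyclicDigitSum p h j (a + b) ≤ cyclicDigitSum p h j a + cyclicDigitSum p h j b := by
  induction hN : a + b using Nat.strong_induction_on generalizing a b j with
  | _ N ih =>
    subst hN
    rcases a.eq_zero_or_pos with rfl | ha
    · simp
    rcases b.eq_zero_or_pos with rfl | hb
    · simp
    have ih' : ∀ x y, x + y < a + b → ∀ j, cyclicDigitSum p h j (x + y) ≤
        cyclicDigitSum p h j x + cyclicDigitSum p h j y := fun x y hxy j => ih _ hxy x y j rfl
    have hpw : p ^ ((j + 1) % h) ≤ p * p ^ (j % h) :=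
      calc p ^ ((j + 1) % h) ≤ p ^ (j % h + 1) := Nat.pow_le_pow_right (by omega) (by
              rw [add_mod]; exact (mod_le _ _).trans (by have := mod_le 1 h; omega))
        _ = p * p ^ (j % h) := by ring
    have hda := div_add_mod a p
    have hdb := div_add_mod b p
    have hma := mod_lt a (by omega : p > 0)
    have hmb := mod_lt b (by omega : p > 0)
    have hsum : cyclicDigitSum p h (j + 1) (a / p + b / p) ≤
        cyclicDigitSum p h (j + 1) (a / p) + cyclicDigitSum p h (j + 1) (b / p) :=
      ih' _ _ (by have := div_lt_self ha hp; have := div_lt_self hb hp; omega) _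
    rw [cyclicDigitSum_eq_mod_add_div hp _ (a + b), cyclicDigitSum_eq_mod_add_div hp _ a,
      cyclicDigitSum_eq_mod_add_div hp _ b, add_mod a b p, Nat.add_div (by omega : 0 < p)]
    generalize p ^ (j % h) = w at *
    split_ifs with hc
    · -- A carry trades `p` units of weight `w` for one unit of weight at most `p * w`.
      have h2a : 2 * (a / p) ≤ p * (a / p) := Nat.mul_le_mul_right _ hp
      have h2b : 2 * (b / p) ≤ p * (b / p) := Nat.mul_le_mul_right _ hp
      have hcarry := ih' (a / p + b / p) 1 (by omega) (j + 1)
      rw [cyclicDigitSum_one hp] at hcarry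
      have hm : (a % p + b % p) % p + p = a % p + b % p := by
        rw [mod_eq_sub_mod hc, mod_eq_of_lt (by omega)]; omega
      have : ((a % p + b % p) % p + p) * w = a % p * w + b % p * w := by rw [hm, add_mul]
      nlinarith
    · rw [mod_eq_of_lt (by omega), add_mul, add_zero]
      linarith

lemma cyclicDigitSum_sum_le (hp : 1 < p) {α : Type*} (s : Finset α) (f : α → ℕ) (j : ℕ) :
    cyclicDigitSum p h j (∑ x ∈ s, f x) ≤ ∑ x ∈ s, cyclicDigitSum p h j (f x) :=
  le_sum_of_subadditive _ (cyclicDigitSum_zero j).le (fun a b => cyclicDigitSum_add_le hp a b j) s f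

lemma cyclicDigitSum_mul_le (hp : 1 < p) (k e j : ℕ) :
    cyclicDigitSum p h j (k * e) ≤ k * cyclicDigitSum p h j e := by
  simpa using cyclicDigitSum_sum_le hp (range k) (fun _ => e) j

lemma cyclicDigitSum_modEq (hp : 1 < p) (j e : ℕ) :
    cyclicDigitSum p h j e ≡ p ^ j * e [MOD p ^ h - 1] := by
  induction e using Nat.strong_induction_on generalizing j with
  | _ e ih =>
    rcases e.eq_zero_or_pos with rfl | he
    · simp [ModEq]
    have hcycle : p ^ (j % h) ≡ p ^ j [MOD p ^ h - 1] := by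
      have h1 : p ^ h ≡ 1 [MOD p ^ h - 1] := modEq_sub (one_le_pow h p (by omega))
      conv_rhs => rw [← div_add_mod j h, pow_add, pow_mul]
      simpa using ((h1.pow (j / h)).mul_right (p ^ (j % h))).symm
    calc cyclicDigitSum p h j e
        = e % p * p ^ (j % h) + cyclicDigitSum p h (j + 1) (e / p) :=
          cyclicDigitSum_eq_mod_add_div hp _ _
      _ ≡ e % p * p ^ j + p ^ (j + 1) * (e / p) [MOD p ^ h - 1] :=
          (hcycle.mul_left _).add (ih _ (div_lt_self he hp) _)
      _ = p ^ j * e := by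
          conv_rhs => rw [← div_add_mod e p]
          ring

lemma sum_cyclicDigitSum (hp : 1 < p) (e : ℕ) :
    ∑ j ∈ range h, cyclicDigitSum p h j e = (∑ j ∈ range h, p ^ j) * (p.digits e).sum := by
  induction e using Nat.strong_induction_on with
  | _ e ih =>
    rcases e.eq_zero_or_pos with rfl | he
    · simp
    have hshift : ∑ j ∈ range h, cyclicDigitSum p h (j + 1) (e / p) =
        ∑ j ∈ range h, cyclicDigitSum p h j (e / p) := by
      have hper := cyclicDigitSum_add_period (p := p) (h := h) 0 (e / p)
      have := sum_range_succ' (fun j => cyclicDigitSum p h j (e / p)) h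
      rw [sum_range_succ] at this
      rw [zero_add] at hper
      omega
    simp_rw [cyclicDigitSum_eq_mod_add_div (h := h) hp _ e, sum_add_distrib, hshift,
      ih _ (div_lt_self he hp), digits_sum_eq_mod_add_div hp e, ← mul_sum]
    rw [sum_congr rfl fun j hj => by rw [mod_eq_of_lt (mem_range.mp hj)]]
    ring

lemma digits_sum_pow_sub_one (hp : 1 < p) (h : ℕ) :
    (p.digits (p ^ h - 1)).sum = h * (p - 1) := by
  induction h with
  | zero => simp
  | succ h ih =>
    have h1 : 1 ≤ p ^ h := one_le_pow h p (by omega)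
    have hrec : p ^ (h + 1) - 1 = (p - 1) + p * (p ^ h - 1) := by
      zify [h1, one_le_pow (h + 1) p (by omega), hp.le]
      ring
    rw [digits_sum_eq_mod_add_div hp, hrec, add_mul_mod_self_left, add_mul_div_left _ _ (by omega),
      mod_eq_of_lt (by omega), div_eq_of_lt (by omega), zero_add, ih]
    ring

lemma digits_sum_mul_pow (hp : 1 < p) (e m : ℕ) :
    (p.digits (e * p ^ m)).sum = (p.digits e).sum := by
  rcases e.eq_zero_or_pos with rfl | he
  · simp
  rw [mul_comm, digits_base_pow_mul hp he, List.sum_append, List.sum_replicate, smul_zero,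
    zero_add]

end Nat

theorem sub_one_mul_padicValNat_multinomial_add_digits_sum {p : ℕ} [hp : Fact p.Prime]
    {α : Type*} (s : Finset α) (f : α → ℕ) :
    (p - 1) * padicValNat p (Nat.multinomial s f) + (p.digits (∑ a ∈ s, f a)).sum =
      ∑ a ∈ s, (p.digits (f a)).sum := by
  have legendre (n : ℕ) : (p - 1) * padicValNat p n.factorial + (p.digits n).sum = n := by
    rw [sub_one_mul_padicValNat_factorial]; exact Nat.sub_add_cancel (Nat.digit_sum_le p n)
  have hprod : padicValNat p (∏ a ∈ s, (f a).factorial) =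
      ∑ a ∈ s, padicValNat p (f a).factorial := by
    simp only [← Nat.factorization_def _ hp.out]
    rw [Nat.factorization_prod fun a _ => (Nat.factorial_pos _).ne', sum_apply']
  have hval : ∑ a ∈ s, padicValNat p (f a).factorial + padicValNat p (Nat.multinomial s f) =
      padicValNat p (∑ a ∈ s, f a).factorial := by
    rw [← Nat.multinomial_spec, padicValNat.mul (prod_ne_zero_iff.mpr fun a _ =>
      (Nat.factorial_pos _).ne') (Nat.multinomial_pos s f).ne', hprod]
  have hsum := legendre (∑ a ∈ s, f a)
  have hparts := sum_congr rfl fun a (_ : a ∈ s) => legendre (f a)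
  rw [sum_add_distrib, ← mul_sum] at hparts
  rw [← hval, mul_add] at hsum
  linarith

namespace AxKatz

open Nat

/-- `dsum` and `dmax` stand for bounds on `∑ₖ deg fₖ` and `maxₖ deg fₖ`; for `dmax = 0` the
division by zero makes the exponent `0`. -/
def axKatzExponent (n dsum dmax : ℕ) : ℕ := ⌈((n : ℚ) - dsum) / dmax⌉₊

lemma axKatzExponent_le {n dsum dmax t : ℕ} (h : 0 < dmax → n ≤ dsum + dmax * t) :
    axKatzExponent n dsum dmax ≤ t := by
  rw [axKatzExponent, Nat.ceil_le]
  rcases dmax.eq_zero_or_pos with rfl | hdmax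
  · simp
  rw [div_le_iff₀ (by exact_mod_cast hdmax)]
  have : (n : ℚ) ≤ dsum + dmax * t := by exact_mod_cast h hdmax
  linarith

lemma mul_axKatzExponent_le {ι : Type*} [Fintype ι] {h : ℕ} (d : ι → ℕ) (g : ι → ℕ → ℕ)
    {n z dsum dmax : ℕ} (hdsum : ∑ k, d k ≤ dsum) (hdmax : ∀ k, d k ≤ dmax)
    (hn : ∀ j < h, n ≤ z + ∑ k, d k * (g k j + 1)) :
    h * axKatzExponent n dsum dmax ≤ h * z + ∑ k, ∑ j ∈ range h, g k j := by
  have hj : ∀ j ∈ range h, axKatzExponent n dsum dmax ≤ z + ∑ k, g k j := by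
    intro j hj
    refine axKatzExponent_le fun hdmax0 => ?_
    have h1 : ∑ k, d k * (g k j + 1) ≤ dmax * ∑ k, g k j + dsum := by
      simp_rw [mul_sum, mul_add, mul_one, sum_add_distrib]
      exact _root_.add_le_add (sum_le_sum fun k _ => Nat.mul_le_mul_right _ (hdmax k)) hdsum
    have h2 : z ≤ dmax * z := Nat.le_mul_of_pos_left z hdmax0
    have := hn j (mem_range.mp hj)
    nlinarith
  calc h * axKatzExponent n dsum dmax = ∑ j ∈ range h, axKatzExponent n dsum dmax := by simp
    _ ≤ ∑ j ∈ range h, (z + ∑ k, g k j) := sum_le_sum hj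
    _ = h * z + ∑ k, ∑ j ∈ range h, g k j := by rw [sum_add_distrib, sum_comm]; simp

variable {p h : ℕ}

lemma pow_sub_one_le_cyclicDigitSum (hp : 1 < p) {e : ℕ} (hdvd : p ^ h - 1 ∣ e) (he : e ≠ 0)
    (j : ℕ) : p ^ h - 1 ≤ cyclicDigitSum p h j e :=
  Nat.le_of_dvd (cyclicDigitSum_pos hp he j) <| Nat.modEq_zero_iff_dvd.mp
    ((cyclicDigitSum_modEq hp j e).trans (Nat.modEq_zero_iff_dvd.mpr (hdvd.mul_left _)))

lemma exists_sum_cyclicDigitSum_eq (hp : 1 < p) (hh : 0 < h) {α : Type*} {s : Finset α}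
    {f : α → ℕ} {m : ℕ} (hf : ∑ x ∈ s, f x = (p ^ h - 1) * p ^ m) (j : ℕ) :
    ∃ g, ∑ x ∈ s, cyclicDigitSum p h j (f x) = (p ^ h - 1) * (g + 1) := by
  have hdvd : p ^ h - 1 ∣ ∑ x ∈ s, cyclicDigitSum p h j (f x) := by
    refine Nat.modEq_zero_iff_dvd.mp
      ((Nat.ModEq.sum fun x _ => cyclicDigitSum_modEq hp j (f x)).trans ?_)
    rw [← mul_sum, hf]
    exact Nat.modEq_zero_iff_dvd.mpr ⟨p ^ j * p ^ m, by ring⟩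
  have hpos : 0 < ∑ x ∈ s, cyclicDigitSum p h j (f x) := by
    obtain ⟨x, hx, hfx⟩ : ∃ x ∈ s, f x ≠ 0 := by
      by_contra! h0
      rw [sum_eq_zero h0] at hf
      exact (Nat.mul_pos (Nat.sub_pos_of_lt (Nat.one_lt_pow hh.ne' hp)) (by positivity)).ne hf
    exact (cyclicDigitSum_pos (h := h) hp hfx j).trans_le
      (single_le_sum (f := fun x => cyclicDigitSum p h j (f x)) (fun _ _ => Nat.zero_le _) hx)
  obtain ⟨c, hc⟩ := hdvd
  exact ⟨c - 1, by rw [hc, Nat.sub_add_cancel (Nat.pos_of_mul_pos_left (hc ▸ hpos))]⟩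

lemma pow_sub_one_mul_padicValNat_multinomial_add [Fact p.Prime] {α : Type*} (s : Finset α)
    (f : α → ℕ) {m : ℕ} (hf : ∑ x ∈ s, f x = (p ^ h - 1) * p ^ m) :
    (p ^ h - 1) * (padicValNat p (multinomial s f) + h) =
      ∑ j ∈ range h, ∑ x ∈ s, cyclicDigitSum p h j (f x) := by
  have hp : 1 < p := (Fact.out : p.Prime).one_lt
  have hgeom : (∑ j ∈ range h, p ^ j) * (p - 1) = p ^ h - 1 := by
    have := geom_sum_mul_add (p - 1) h
    rw [Nat.sub_add_cancel hp.le] at this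
    omega
  have hval := sub_one_mul_padicValNat_multinomial_add_digits_sum (p := p) s f
  rw [hf, digits_sum_mul_pow hp, digits_sum_pow_sub_one hp] at hval
  rw [sum_comm, sum_congr rfl fun x _ => sum_cyclicDigitSum hp (f x), ← mul_sum, ← hval, ← hgeom]
  ring

variable {ι σ : Type*} [Fintype ι] [Fintype σ]

lemma pow_sub_one_mul_card_ne_zero_le (hp : 1 < p) (V : ι → Finset (σ →₀ ℕ))
    (e : ι → (σ →₀ ℕ) → ℕ) (d : ι → ℕ) (hdeg : ∀ k, ∀ w ∈ V k, ∑ i, w i ≤ d k)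
    (hu : ∀ i, p ^ h - 1 ∣ (∑ k, ∑ w ∈ V k, e k w • w) i) (j : ℕ) :
    (p ^ h - 1) * #{i | (∑ k, ∑ w ∈ V k, e k w • w) i ≠ 0} ≤
      ∑ k, d k * ∑ w ∈ V k, cyclicDigitSum p h j (e k w) := by
  set u := ∑ k, ∑ w ∈ V k, e k w • w
  have hui (i : σ) : u i = ∑ k, ∑ w ∈ V k, e k w * w i := by
    simp [u, Finsupp.finsetSum_apply]
  calc (p ^ h - 1) * #{i | u i ≠ 0}
      = ∑ i with u i ≠ 0, (p ^ h - 1) := by rw [sum_const, smul_eq_mul, mul_comm]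
    _ ≤ ∑ i with u i ≠ 0, cyclicDigitSum p h j (u i) :=
        sum_le_sum fun i hi => pow_sub_one_le_cyclicDigitSum hp (hu i) (mem_filter.mp hi).2 j
    _ ≤ ∑ i, cyclicDigitSum p h j (u i) := sum_le_sum_of_subset (filter_subset _ _)
    _ ≤ ∑ i, ∑ k, ∑ w ∈ V k, w i * cyclicDigitSum p h j (e k w) := by
        refine sum_le_sum fun i _ => ?_
        rw [hui]
        refine (cyclicDigitSum_sum_le hp _ _ j).trans (sum_le_sum fun k _ => ?_)
        refine (cyclicDigitSum_sum_le hp _ _ j).trans (sum_le_sum fun w _ => ?_)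
        rw [mul_comm]
        exact cyclicDigitSum_mul_le hp _ _ j
    _ = ∑ k, ∑ w ∈ V k, (∑ i, w i) * cyclicDigitSum p h j (e k w) := by
        simp_rw [sum_mul]
        rw [sum_comm]
        exact sum_congr rfl fun k _ => sum_comm
    _ ≤ ∑ k, d k * ∑ w ∈ V k, cyclicDigitSum p h j (e k w) := by
        simp_rw [mul_sum]
        exact sum_le_sum fun k _ => sum_le_sum fun w hw => Nat.mul_le_mul_right _ (hdeg k w hw)

/-- Wan's estimate for one term of the multinomial expansion of `∏ₖ fₖ ^ ((q - 1) p ^ m)`: `e k`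
are the exponents given to the monomials `V k` of `fₖ`, and the resulting monomial
`∑ₖ ∑_w e k w • w` has all exponents divisible by `q - 1`. -/
theorem wan_estimate [hp : Fact p.Prime] (V : ι → Finset (σ →₀ ℕ)) (e : ι → (σ →₀ ℕ) → ℕ)
    (d : ι → ℕ) {m dsum dmax : ℕ} (hdsum : ∑ k, d k ≤ dsum) (hdmax : ∀ k, d k ≤ dmax)
    (he : ∀ k, ∑ w ∈ V k, e k w = (p ^ h - 1) * p ^ m) (hdeg : ∀ k, ∀ w ∈ V k, ∑ i, w i ≤ d k)
    (hu : ∀ i, p ^ h - 1 ∣ (∑ k, ∑ w ∈ V k, e k w • w) i) :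
    h * axKatzExponent (Fintype.card σ) dsum dmax ≤
      h * #{i | (∑ k, ∑ w ∈ V k, e k w • w) i = 0} +
        ∑ k, padicValNat p (multinomial (V k) (e k)) := by
  rcases h.eq_zero_or_pos with rfl | hh
  · simp
  have hp1 := hp.out.one_lt
  have hq : 0 < p ^ h - 1 := Nat.sub_pos_of_lt (Nat.one_lt_pow hh.ne' hp1)
  choose g hg using fun k => exists_sum_cyclicDigitSum_eq hp1 hh (he k)
  have hval (k : ι) : padicValNat p (multinomial (V k) (e k)) = ∑ j ∈ range h, g k j := by
    have := pow_sub_one_mul_padicValNat_multinomial_add (V k) (e k) (he k)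
    simp_rw [hg, ← mul_sum, sum_add_distrib, sum_const, card_range, smul_eq_mul, mul_one] at this
    exact Nat.add_right_cancel (Nat.eq_of_mul_eq_mul_left hq this)
  simp_rw [hval]
  refine mul_axKatzExponent_le d g hdsum hdmax fun j _ => ?_
  have hcard := card_filter_add_card_filter_not (s := (univ : Finset σ))
    (fun i => (∑ k, ∑ w ∈ V k, e k w • w) i = 0)
  have hbound := pow_sub_one_mul_card_ne_zero_le hp1 V e d hdeg hu j
  simp_rw [hg, mul_left_comm (d _) (p ^ h - 1), ← mul_sum] at hbound
  rw [Finset.card_univ] at hcard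
  have := Nat.le_of_mul_le_mul_left hbound hq
  simp only [ne_eq] at this
  omega

end AxKatz

namespace MvPolynomial

variable {σ R : Type*} [CommSemiring R]

lemma pow_eq_sum_piAntidiag [DecidableEq σ] (F : MvPolynomial σ R) (D : ℕ) :
    F ^ D = ∑ e ∈ F.support.piAntidiag D, monomial (∑ w ∈ F.support, e w • w)
      (Nat.multinomial F.support e * ∏ w ∈ F.support, coeff w F ^ e w) := by
  conv_lhs => rw [F.as_sum]
  rw [sum_pow_eq_sum_piAntidiag]
  refine sum_congr rfl fun e _ => ?_
  simp_rw [monomial_pow, ← monomial_sum_prod, ← map_natCast (C : R →+* MvPolynomial σ R),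
    C_mul_monomial]

lemma sum_eval_comp [Fintype σ] [DecidableEq σ] {α : Type*} [Fintype α] (χ : α → R)
    (g : MvPolynomial σ R) :
    ∑ y : σ → α, eval (fun i => χ (y i)) g = ∑ v ∈ g.support, coeff v g * ∏ i, ∑ x, χ x ^ v i := by
  simp_rw [eval_eq', sum_comm (s := univ), ← mul_sum]
  refine sum_congr rfl fun v _ => ?_
  rw [prod_univ_sum, Fintype.piFinset_univ]

end MvPolynomial

lemma card_pow_dvd_prod_sum_pow {α σ R : Type*} [Fintype α] [Fintype σ] [CommSemiring R]
    (χ : α → R) (v : σ → ℕ) :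
    (Fintype.card α : R) ^ #{i | v i = 0} ∣ ∏ i, ∑ x, χ x ^ v i := by
  rw [← prod_filter_mul_prod_filter_not univ (fun i => v i = 0)]
  refine Dvd.dvd.mul_right (dvd_of_eq ?_) _
  rw [prod_congr rfl fun i hi => by rw [(mem_filter.mp hi).2]]
  simp

namespace AxKatz

open MvPolynomial

variable {p h : ℕ} [Fact p.Prime] {R ι σ : Type*} [CommRing R] [Fintype ι] [Fintype σ]

theorem pow_dvd_pow_mul_coeff_prod_pow (f : ι → MvPolynomial σ R) {dsum dmax : ℕ}
    (hdsum : ∑ k, (f k).totalDegree ≤ dsum) (hdmax : ∀ k, (f k).totalDegree ≤ dmax) (m : ℕ)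
    {v : σ →₀ ℕ} (hv : ∀ i, p ^ h - 1 ∣ v i) :
    (p : R) ^ (h * axKatzExponent (Fintype.card σ) dsum dmax) ∣
      (p : R) ^ (h * #{i | v i = 0}) * coeff v (∏ k, f k ^ ((p ^ h - 1) * p ^ m)) := by
  classical
  simp_rw [pow_eq_sum_piAntidiag]
  rw [prod_univ_sum, coeff_sum, mul_sum]
  refine dvd_sum fun E hE => ?_
  rw [← monomial_sum_prod, coeff_monomial]
  split_ifs with hEv
  swap
  · simp
  rw [Fintype.mem_piFinset] at hE
  have hest := wan_estimate (fun k => (f k).support) E (fun k => (f k).totalDegree) hdsum hdmax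
    (fun k => (mem_piAntidiag.mp (hE k)).1)
    (fun k w hw => by simpa [Finsupp.sum_fintype] using le_totalDegree hw) (hEv ▸ hv)
  rw [hEv] at hest
  have hnat : p ^ (h * axKatzExponent (Fintype.card σ) dsum dmax) ∣
      p ^ (h * #{i | v i = 0}) * ∏ k, Nat.multinomial (f k).support (E k) := by
    refine (pow_dvd_pow p hest).trans ?_
    rw [pow_add, ← prod_pow_eq_pow_sum]
    exact mul_dvd_mul_left _ (prod_dvd_prod_of_dvd _ _ fun k _ => pow_padicValNat_dvd)
  rw [prod_mul_distrib, ← mul_assoc]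
  exact Dvd.dvd.mul_right (by exact_mod_cast Nat.cast_dvd_cast hnat) _

theorem pow_dvd_pow_mul_coeff_prod_one_sub_pow (f : ι → MvPolynomial σ R) {dsum dmax : ℕ}
    (hdsum : ∑ k, (f k).totalDegree ≤ dsum) (hdmax : ∀ k, (f k).totalDegree ≤ dmax) (m : ℕ)
    {v : σ →₀ ℕ} (hv : ∀ i, p ^ h - 1 ∣ v i) :
    (p : R) ^ (h * axKatzExponent (Fintype.card σ) dsum dmax) ∣
      (p : R) ^ (h * #{i | v i = 0}) * coeff v (∏ k, (1 - f k ^ ((p ^ h - 1) * p ^ m))) := by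
  classical
  rw [prod_sub, coeff_sum, mul_sum]
  refine dvd_sum fun t _ => ?_
  rw [prod_const_one, mul_one, ← map_one C, ← map_neg C, ← map_pow, coeff_C_mul, mul_left_comm,
    ← prod_coe_sort t]
  refine Dvd.dvd.mul_left
    (pow_dvd_pow_mul_coeff_prod_pow (fun k : t => f k) ?_ (fun k => hdmax k) m hv) _
  rw [sum_coe_sort t fun k => (f k).totalDegree]
  exact (sum_le_sum_of_subset (subset_univ t)).trans hdsum

end AxKatz

namespace WittVector

variable {p : ℕ} [hp : Fact p.Prime] {K : Type*} [Field K] [CharP K p]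

local notation "𝕎" => WittVector p

lemma p_dvd_iff_constantCoeff_eq_zero [PerfectRing K p] (x : 𝕎 K) :
    (p : 𝕎 K) ∣ x ↔ constantCoeff x = 0 := by
  rw [← Ideal.mem_span_singleton, mem_span_p_iff_coeff_zero_eq_zero, constantCoeff_apply]

lemma p_dvd_eval_iff [PerfectRing K p] {σ : Type*} (F : MvPolynomial σ (𝕎 K)) (X : σ → 𝕎 K) :
    (p : 𝕎 K) ∣ MvPolynomial.eval X F ↔
      MvPolynomial.eval₂ constantCoeff (fun i => constantCoeff (X i)) F = 0 := by
  rw [p_dvd_iff_constantCoeff_eq_zero, MvPolynomial.eval, MvPolynomial.coe_eval₂Hom,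
    MvPolynomial.eval₂_comp_left, RingHom.comp_id]
  rfl

lemma pow_dvd_natCast_iff {c N : ℕ} : (p : 𝕎 K) ^ c ∣ (N : 𝕎 K) ↔ p ^ c ∣ N := by
  refine ⟨fun hdvd => ?_, fun hdvd => by exact_mod_cast Nat.cast_dvd_cast hdvd⟩
  rcases eq_or_ne N 0 with rfl | hN
  · exact dvd_zero _
  obtain ⟨a, M, hM, rfl⟩ := Nat.exists_eq_pow_mul_and_not_dvd hN p hp.out.ne_one
  have hunit : IsUnit (M : 𝕎 K) := by
    refine isUnit_of_coeff_zero_ne_zero _ ?_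
    rw [← constantCoeff_apply, map_natCast]
    exact (CharP.cast_eq_zero_iff K p M).not.mpr hM
  push_cast at hdvd
  rw [hunit.dvd_mul_right, pow_dvd_pow_iff (p_nonzero p K) (irreducible p).not_isUnit] at hdvd
  exact (pow_dvd_pow p hdvd).mul_right M

variable [Fintype K]

lemma pow_succ_dvd_pow_sub_one_of_not_dvd {a : 𝕎 K} (ha : ¬ (p : 𝕎 K) ∣ a) (m : ℕ) :
    (p : 𝕎 K) ^ (m + 1) ∣ a ^ ((Fintype.card K - 1) * p ^ m) - 1 := by
  rw [p_dvd_iff_constantCoeff_eq_zero] at ha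
  have := dvd_sub_pow_of_dvd_sub (p := p) (a := a ^ (Fintype.card K - 1)) (b := 1) ?_ m
  · rwa [one_pow, ← pow_mul] at this
  rw [p_dvd_iff_constantCoeff_eq_zero, map_sub, map_pow, map_one,
    FiniteField.pow_card_sub_one_eq_one _ ha, sub_self]

open Classical in
lemma pow_dvd_sum_prod_one_sub_pow_sub_card {Y ι : Type*} [Fintype Y] [Fintype ι]
    (a : Y → ι → 𝕎 K) (m : ℕ) :
    (p : 𝕎 K) ^ m ∣ ∑ y, ∏ k, (1 - a y k ^ ((Fintype.card K - 1) * p ^ m)) -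
      #{y | ∀ k, (p : 𝕎 K) ∣ a y k} := by
  have hm : m ≤ (Fintype.card K - 1) * p ^ m :=
    (Nat.lt_pow_self hp.out.one_lt).le.trans
      (Nat.le_mul_of_pos_left _ (by have := Fintype.one_lt_card (α := K); omega))
  have hmk (b : 𝕎 K) : Ideal.Quotient.mk (Ideal.span {(p : 𝕎 K) ^ m})
      (1 - b ^ ((Fintype.card K - 1) * p ^ m)) = if (p : 𝕎 K) ∣ b then 1 else 0 := by
    split_ifs with hb
    · rw [map_sub, map_one, sub_eq_self, Ideal.Quotient.eq_zero_iff_dvd]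
      exact (pow_dvd_pow _ hm).trans (pow_dvd_pow_of_dvd hb _)
    · rw [Ideal.Quotient.eq_zero_iff_dvd, ← neg_sub, dvd_neg]
      exact (pow_dvd_pow _ m.le_succ).trans (pow_succ_dvd_pow_sub_one_of_not_dvd hb m)
  rw [← Ideal.Quotient.eq_zero_iff_dvd, map_sub, sub_eq_zero, map_natCast, ← sum_boole, map_sum]
  simp_rw [map_prod, hmk, Fintype.prod_boole]

lemma sum_teichmuller_pow_eq_zero {u : ℕ} (hu : ¬ Fintype.card K - 1 ∣ u) :
    ∑ x : K, teichmuller p x ^ u = 0 := by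
  obtain ⟨g, hg⟩ : ∃ g : Kˣ, g ^ u ≠ 1 := by
    by_contra! h
    exact hu ((FiniteField.forall_pow_eq_one_iff K u).mp h)
  have hg' : teichmuller p (g : K) ^ u ≠ 1 := by
    intro h1
    apply hg
    ext
    simpa [← map_pow, constantCoeff_apply] using congrArg constantCoeff h1
  by_contra hS
  refine hg' ((mul_eq_right₀ hS).mp ?_)
  rw [mul_sum]
  simp_rw [← mul_pow, ← map_mul]
  exact Equiv.sum_comp (Equiv.mulLeft₀ (g : K) g.ne_zero) (fun x => teichmuller p x ^ u)

lemma natCard_box_zeros_eq {σ ι : Type*} [Fintype σ] (B : Set (σ → 𝕎 K))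
    (hB : Nat.card B = Fintype.card K ^ Fintype.card σ)
    (hBsurj : ∀ z : σ → 𝕎 K, ∃ x ∈ B, ∀ j, (p : 𝕎 K) ∣ x j - z j)
    (f : ι → MvPolynomial σ (𝕎 K)) :
    Nat.card {X : σ → 𝕎 K | X ∈ B ∧ ∀ k, (p : 𝕎 K) ∣ MvPolynomial.eval X (f k)} =
      Nat.card {y : σ → K //
        ∀ k, (p : 𝕎 K) ∣ MvPolynomial.eval (fun i => teichmuller p (y i)) (f k)} := by
  let red : B → σ → K := fun X i => constantCoeff (X.1 i)
  have : Finite B :=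
    Nat.finite_of_card_ne_zero (by rw [hB]; exact pow_ne_zero _ Fintype.card_ne_zero)
  have hred : Function.Bijective red := by
    refine (Nat.bijective_iff_surjective_and_card red).mpr ⟨fun y => ?_, by
      rw [hB, Nat.card_fun, Nat.card_eq_fintype_card, Nat.card_eq_fintype_card]⟩
    obtain ⟨x, hx, hxy⟩ := hBsurj fun i => teichmuller p (y i)
    refine ⟨⟨x, hx⟩, funext fun i => ?_⟩
    have := (p_dvd_iff_constantCoeff_eq_zero _).mp (hxy i)
    rwa [map_sub, sub_eq_zero, constantCoeff_apply (teichmuller p _),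
      teichmuller_coeff_zero] at this
  refine Nat.card_congr ((Equiv.subtypeSubtypeEquivSubtypeInter (· ∈ B) _).symm.trans
    (Equiv.subtypeEquiv (Equiv.ofBijective red hred) fun X => forall_congr' fun k => ?_))
  simp only [p_dvd_eval_iff, Equiv.ofBijective_apply, red, constantCoeff_apply (teichmuller p _),
    teichmuller_coeff_zero]

end WittVector

namespace AxKatz

open MvPolynomial

variable {p h : ℕ} [Fact p.Prime] {K : Type*} [Field K] [Fintype K] [CharP K p]
  {ι σ : Type*} [Fintype ι] [Fintype σ]

local notation "𝕎" => WittVector p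

theorem pow_dvd_sum_prod_one_sub_eval_pow [DecidableEq σ] (hK : Fintype.card K = p ^ h)
    (f : ι → MvPolynomial σ (𝕎 K)) {dsum dmax : ℕ} (hdsum : ∑ k, (f k).totalDegree ≤ dsum)
    (hdmax : ∀ k, (f k).totalDegree ≤ dmax) :
    (p : 𝕎 K) ^ (h * axKatzExponent (Fintype.card σ) dsum dmax) ∣
      ∑ y : σ → K, ∏ k, (1 - eval (fun i => WittVector.teichmuller p (y i)) (f k) ^
        ((p ^ h - 1) * p ^ (h * axKatzExponent (Fintype.card σ) dsum dmax))) := by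
  set m := h * axKatzExponent (Fintype.card σ) dsum dmax
  have heval (y : σ → K) :
      ∏ k, (1 - eval (fun i => WittVector.teichmuller p (y i)) (f k) ^ ((p ^ h - 1) * p ^ m)) =
        eval (fun i => WittVector.teichmuller p (y i)) (∏ k, (1 - f k ^ ((p ^ h - 1) * p ^ m))) := by
    simp [map_prod]
  rw [sum_congr rfl fun y _ => heval y, sum_eval_comp]
  refine dvd_sum fun v _ => ?_
  by_cases hv : ∀ i, p ^ h - 1 ∣ v i
  · have hsum := card_pow_dvd_prod_sum_pow (fun x : K => WittVector.teichmuller p x) v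
    rw [hK, Nat.cast_pow, ← pow_mul] at hsum
    refine (pow_dvd_pow_mul_coeff_prod_one_sub_pow f hdsum hdmax m hv).trans ?_
    rw [mul_comm]
    exact mul_dvd_mul_left _ hsum
  · obtain ⟨i, hi⟩ := not_forall.mp hv
    rw [prod_eq_zero (mem_univ i) (WittVector.sum_teichmuller_pow_eq_zero (hK ▸ hi)), mul_zero]
    exact dvd_zero _

theorem pow_dvd_card_teichmuller_zeros (hK : Fintype.card K = p ^ h)
    (f : ι → MvPolynomial σ (𝕎 K)) {dsum dmax : ℕ} (hdsum : ∑ k, (f k).totalDegree ≤ dsum)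
    (hdmax : ∀ k, (f k).totalDegree ≤ dmax) :
    (p ^ h) ^ axKatzExponent (Fintype.card σ) dsum dmax ∣
      Nat.card {y : σ → K //
        ∀ k, (p : 𝕎 K) ∣ eval (fun i => WittVector.teichmuller p (y i)) (f k)} := by
  classical
  rw [← pow_mul, ← WittVector.pow_dvd_natCast_iff (K := K), Nat.card_eq_fintype_card,
    Fintype.card_subtype]
  have hT := WittVector.pow_dvd_sum_prod_one_sub_pow_sub_card
    (fun (y : σ → K) k => eval (fun i => WittVector.teichmuller p (y i)) (f k))
    (h * axKatzExponent (Fintype.card σ) dsum dmax)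
  rw [hK] at hT
  convert (dvd_sub_right (pow_dvd_sum_prod_one_sub_eval_pow hK f hdsum hdmax)).mp hT

end AxKatz

theorem ax_katz_over_boxes_general (p h n s : ℕ) [Fact p.Prime]
    (B : Set (Fin n → WittVector p (GaloisField p h)))
    (hBcard : Nat.card B = (p ^ h) ^ n)
    (hBsurj : ∀ z : Fin n → WittVector p (GaloisField p h),
      ∃ x ∈ B, ∀ j, (p : WittVector p (GaloisField p h)) ∣ x j - z j)
    (f : Fin s → MvPolynomial (Fin n) (WittVector p (GaloisField p h))) :
    (p ^ h) ^
        ⌈(((n : ℚ) - ∑ k, ((f k).totalDegree : ℚ)) /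
            ((Finset.univ.sup fun k => (f k).totalDegree : ℕ) : ℚ))⌉₊ ∣
      Nat.card {X : Fin n → WittVector p (GaloisField p h) | X ∈ B ∧
        ∀ k : Fin s, (p : WittVector p (GaloisField p h)) ∣ MvPolynomial.eval X (f k)} := by
  rcases h.eq_zero_or_pos with rfl | hh
  · simp
  let : Fintype (GaloisField p h) := Fintype.ofFinite _
  have hK : Fintype.card (GaloisField p h) = p ^ h := by
    rw [← Nat.card_eq_fintype_card, GaloisField.card p h hh.ne']
  rw [WittVector.natCard_box_zeros_eq B (by rw [hBcard, hK, Fintype.card_fin]) hBsurj]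
  convert AxKatz.pow_dvd_card_teichmuller_zeros hK f le_rfl
    fun k => le_sup (f := fun k => (f k).totalDegree) (mem_univ k) using 2
  simp [AxKatz.axKatzExponent]

/-- Ax–Katz over boxes: for a box `𝓑₁ ⊆ ℤ_q^n` (`ℤ_q ≅ W(𝔽_q)`, `q = p^h`) with `q^n`
elements reducing onto `𝔽_q^n`, and nonconstant `f₁,…,f_s ∈ ℤ_q[x₁,…,x_n]`,
`V = {X ∈ 𝓑₁ : f_k(X) ≡ 0 mod p ∀k}` satisfies
`ord_q(|V|) ≥ ⌈(n − Σ_k deg f_k)/max_k deg f_k⌉*`, i.e. `q^⌈…⌉* ∣ |V|`. -/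
theorem ax_katz_over_boxes (p h n s : ℕ) [Fact p.Prime] (hh : 0 < h) (hs : 0 < s)
    (B : Set (Fin n → WittVector p (GaloisField p h)))
    (hBcard : Nat.card B = (p ^ h) ^ n)
    (hBsurj : ∀ z : Fin n → WittVector p (GaloisField p h),
      ∃ x ∈ B, ∀ j, (p : WittVector p (GaloisField p h)) ∣ x j - z j)
    (f : Fin s → MvPolynomial (Fin n) (WittVector p (GaloisField p h)))
    (hf : ∀ k, 0 < (f k).totalDegree) :
    (p ^ h) ^
        ⌈(((n : ℚ) - ∑ k, ((f k).totalDegree : ℚ)) /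
            ((Finset.univ.sup fun k => (f k).totalDegree : ℕ) : ℚ))⌉₊ ∣
      Nat.card {X : Fin n → WittVector p (GaloisField p h) | X ∈ B ∧
        ∀ k : Fin s, (p : WittVector p (GaloisField p h)) ∣ MvPolynomial.eval X (f k)} :=
  ax_katz_over_boxes_general p h n s B hBcard hBsurj f
end
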